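/- arXiv:1109.4986 — 7 statements merged into one kernel-verified Lean document; each statement's English description precedes it below -/
import Mathlib

section
/- Let 0 ≤ ℓ ≤ m, let i_1,…,i_ℓ ∈ {0,…,k} and i_{ℓ+1},…,i_m ∈ {k+1,…,2k}, and set a = i_1+⋯+i_m and b = i_1+⋯+i_ℓ + k(m−ℓ). Then in R: if ℓ = m, the product x_{i_1}⋯x_{i_m} equals u^a; and if ℓ < m (so that a ≥ k+1), the product x_{i_1}⋯x_{i_ℓ}·y_{i_{ℓ+1}}⋯y_{i_m} equals u^a + (a−b)·u^{a−k−1}·ε. (Ribbon Product Lemma, Lemma 3.4.) -/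
/-!
Ribbon Product Lemma (Lemma 3.4).  We work in `R = ℂ[u][ε]/(ε²)`, modeled as
`DualNumber (Polynomial ℂ)`.  The variables are `x i = u^i` (for `0 ≤ i ≤ k`) and
`y j = u^j + (j-k)·u^(j-k-1)·ε` (for `k+1 ≤ j ≤ 2k`).

Since `ε² = 0`, a product of factors `u^(n_t) + c_t·u^(n_t-k-1)·ε` keeps only the terms with a
single `ε`, and all of them carry the same power `u^(Σ n_t - k - 1)`; so the product is
`u^(Σ n_t) + (Σ c_t)·u^(Σ n_t - k - 1)·ε`.  Here `c = 0` for the `x`-factors and `c = i_t - k` for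
the `y`-factors, and `Σ (i_t - k)` over the `y`-factors is `a - b`.
-/

noncomputable section

/-- The ring `ℂ[u][ε]/(ε²)`. -/
abbrev RibR : Type := DualNumber (Polynomial ℂ)

/-- The polynomial variable `u`. -/
def uPoly : Polynomial ℂ := Polynomial.X

/-- `x_i := u^i`. -/
def xvar (i : ℕ) : RibR := TrivSqZeroExt.inl (uPoly ^ i)

/-- `y_j := u^j + (j-k)·u^(j-k-1)·ε` (intended for `k+1 ≤ j ≤ 2k`, i.e. `y_{k+i}
with `i = j - k`). -/
def yvar (k j : ℕ) : RibR :=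
  TrivSqZeroExt.inl (uPoly ^ j) +
    TrivSqZeroExt.inr (((j - k : ℕ) : Polynomial ℂ) * uPoly ^ (j - k - 1))

open TrivSqZeroExt Finset

theorem TrivSqZeroExt.prod_inl_add_inr {ι R M : Type*} [CommSemiring R] [AddCommMonoid M]
    [Module R M] [Module Rᵐᵒᵖ M] [IsCentralScalar R M] [DecidableEq ι] (s : Finset ι)
    (f : ι → R) (g : ι → M) :
    ∏ t ∈ s, (inl (f t) + inr (g t) : TrivSqZeroExt R M) =
      inl (∏ t ∈ s, f t) + inr (∑ t ∈ s, (∏ r ∈ s.erase t, f r) • g t) := by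
  induction s using Finset.induction_on with
  | empty => simp
  | @insert a s ha ih =>
    have herase : ∀ t ∈ s, (insert a s).erase t = insert a (s.erase t) := fun t ht =>
      erase_insert_of_ne fun h => ha (h ▸ ht)
    have hsum : ∑ t ∈ s, (∏ r ∈ (insert a s).erase t, f r) • g t =
        f a • ∑ t ∈ s, (∏ r ∈ s.erase t, f r) • g t := by
      rw [smul_sum]
      refine sum_congr rfl fun t ht => ?_
      rw [herase t ht, prod_insert fun h => ha (mem_of_mem_erase h), mul_smul]
    rw [prod_insert ha, ih, prod_insert ha, sum_insert ha, erase_insert ha, hsum]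
    ext <;> simp [add_comm]

theorem prod_erase_pow_mul_pow_sub {ι M : Type*} [CommMonoid M] [DecidableEq ι] {s : Finset ι}
    {t : ι} (ht : t ∈ s) (x : M) (n : ι → ℕ) {d : ℕ} (hd : d ≤ n t) :
    (∏ r ∈ s.erase t, x ^ n r) * x ^ (n t - d) = x ^ (∑ r ∈ s, n r - d) := by
  rw [prod_pow_eq_pow_sum, ← pow_add, ← add_sum_erase s n ht]
  congr 1
  omega

theorem DualNumber.prod_inl_pow_add_inr_mul_pow {ι A : Type*} [CommSemiring A] [DecidableEq ι]
    (s : Finset ι) (x : A) (n : ι → ℕ) (c : ι → A) (d : ℕ)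
    (hd : ∀ t ∈ s, c t ≠ 0 → d ≤ n t) :
    ∏ t ∈ s, (inl (x ^ n t) + inr (c t * x ^ (n t - d)) : DualNumber A) =
      inl (x ^ ∑ t ∈ s, n t) + inr ((∑ t ∈ s, c t) * x ^ (∑ t ∈ s, n t - d)) := by
  rw [TrivSqZeroExt.prod_inl_add_inr, prod_pow_eq_pow_sum, sum_mul]
  congr 2
  refine sum_congr rfl fun t ht => ?_
  by_cases hc : c t = 0
  · simp [hc]
  · rw [smul_eq_mul, mul_left_comm, prod_erase_pow_mul_pow_sub ht x n (hd t ht hc)]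

theorem Fin.sum_ite_val_lt_zero_tsub {m : ℕ} (ℓ k : ℕ) (i : Fin m → ℕ)
    (hi : ∀ t : Fin m, ℓ ≤ (t : ℕ) → k ≤ i t) :
    ∑ t : Fin m, (if (t : ℕ) < ℓ then 0 else i t - k) =
      ∑ t, i t - ((∑ t ∈ univ.filter (fun t : Fin m => (t : ℕ) < ℓ), i t) + k * (m - ℓ)) := by
  have hcard : #(univ.filter fun t : Fin m => ¬ (t : ℕ) < ℓ) = m - ℓ := by
    have := card_filter_add_card_filter_not (s := (univ : Finset (Fin m))) (fun t => (t : ℕ) < ℓ)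
    rw [Fin.card_filter_val_lt, card_univ, Fintype.card_fin] at this
    omega
  have hge : ∀ t ∈ univ.filter fun t : Fin m => ¬ (t : ℕ) < ℓ, k ≤ i t := fun t ht =>
    hi t (not_lt.1 (mem_filter.1 ht).2)
  have hlow : k * (m - ℓ) ≤ ∑ t ∈ univ.filter fun t : Fin m => ¬ (t : ℕ) < ℓ, i t := by
    have := card_nsmul_le_sum _ _ _ hge
    rwa [hcard, smul_eq_mul, mul_comm] at this
  rw [sum_ite, sum_const_zero, zero_add, sum_tsub_distrib _ hge, Finset.sum_const, hcard, smul_eq_mul,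
    mul_comm (m - ℓ) k, ← sum_filter_add_sum_filter_not univ (fun t : Fin m => (t : ℕ) < ℓ) i]
  omega

theorem ribbon_product_lemma_general (k : ℕ) (m ℓ : ℕ)
    (i : Fin m → ℕ)
    (hy : ∀ t : Fin m, ℓ ≤ (t : ℕ) → k + 1 ≤ i t ∧ i t ≤ 2 * k)
    (a b : ℕ)
    (ha : a = ∑ t, i t)
    (hb : b = (∑ t ∈ Finset.univ.filter (fun t : Fin m => (t : ℕ) < ℓ), i t) + k * (m - ℓ)) :
    (ℓ = m →
      (∏ t : Fin m, if (t : ℕ) < ℓ then xvar (i t) else yvar k (i t)) =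
        TrivSqZeroExt.inl (uPoly ^ a)) ∧
    (ℓ < m →
      k + 1 ≤ a ∧
      (∏ t : Fin m, if (t : ℕ) < ℓ then xvar (i t) else yvar k (i t)) =
        TrivSqZeroExt.inl (uPoly ^ a) +
          TrivSqZeroExt.inr (((a - b : ℕ) : Polynomial ℂ) * uPoly ^ (a - k - 1))) := by
  set c : Fin m → ℕ := fun t => if (t : ℕ) < ℓ then 0 else i t - k
  have hfactor : ∀ t : Fin m, (if (t : ℕ) < ℓ then xvar (i t) else yvar k (i t)) =
      inl (uPoly ^ i t) + inr ((c t : Polynomial ℂ) * uPoly ^ (i t - (k + 1))) := by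
    intro t
    by_cases h : (t : ℕ) < ℓ <;> simp [c, h, xvar, yvar, Nat.sub_sub]
  have hdeg : ∀ t ∈ univ, (c t : Polynomial ℂ) ≠ 0 → k + 1 ≤ i t := by
    intro t _ hc
    by_cases h : (t : ℕ) < ℓ
    · simp [c, h] at hc
    · exact (hy t (not_lt.1 h)).1
  have hprod : (∏ t : Fin m, if (t : ℕ) < ℓ then xvar (i t) else yvar k (i t)) =
      inl (uPoly ^ a) + inr (((a - b : ℕ) : Polynomial ℂ) * uPoly ^ (a - k - 1)) := by
    rw [prod_congr rfl fun t _ => hfactor t,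
      DualNumber.prod_inl_pow_add_inr_mul_pow _ _ _ _ _ hdeg, ← Nat.cast_sum,
      Fin.sum_ite_val_lt_zero_tsub ℓ k i fun t ht => Nat.le_of_succ_le (hy t ht).1, ha, hb,
      Nat.sub_sub]
  refine ⟨fun hℓ => ?_, fun hℓ => ⟨?_, hprod⟩⟩
  · have hab : a = b := by simp [ha, hb, hℓ]
    simp [hprod, hab]
  · rw [ha]
    exact (hy ⟨ℓ, hℓ⟩ le_rfl).1.trans (single_le_sum (fun _ _ => Nat.zero_le _) (mem_univ _))

/-- **Ribbon Product Lemma.**  If `i₁,…,i_ℓ ∈ {0,…,k}` and `i_{ℓ+1},…,i_m ∈ {k+1,…,2k}`,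
and `a = i₁+⋯+i_m`, `b = i₁+⋯+i_ℓ + k(m-ℓ)`, then the product
`x_{i₁}⋯x_{i_ℓ}·y_{i_{ℓ+1}}⋯y_{i_m}` equals `u^a` when `ℓ = m`, and equals
`u^a + (a-b)·u^(a-k-1)·ε` (with `a ≥ k+1`) when `ℓ < m`. -/
theorem ribbon_product_lemma (k : ℕ) (hk : 1 ≤ k) (m ℓ : ℕ) (hℓm : ℓ ≤ m)
    (i : Fin m → ℕ)
    (hx : ∀ t : Fin m, (t : ℕ) < ℓ → i t ≤ k)
    (hy : ∀ t : Fin m, ℓ ≤ (t : ℕ) → k + 1 ≤ i t ∧ i t ≤ 2 * k)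
    (a b : ℕ)
    (ha : a = ∑ t, i t)
    (hb : b = (∑ t ∈ Finset.univ.filter (fun t : Fin m => (t : ℕ) < ℓ), i t) + k * (m - ℓ)) :
    (ℓ = m →
      (∏ t : Fin m, if (t : ℕ) < ℓ then xvar (i t) else yvar k (i t)) =
        TrivSqZeroExt.inl (uPoly ^ a)) ∧
    (ℓ < m →
      k + 1 ≤ a ∧
      (∏ t : Fin m, if (t : ℕ) < ℓ then xvar (i t) else yvar k (i t)) =
        TrivSqZeroExt.inl (uPoly ^ a) +
          TrivSqZeroExt.inr (((a - b : ℕ) : Polynomial ℂ) * uPoly ^ (a - k - 1))) :=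
  ribbon_product_lemma_general k m ℓ i hy a b ha hb

end
end

section
/- Let m ≥ 2. For a degree-m monomial x_{i_1}⋯x_{i_ℓ}·y_{i_{ℓ+1}}⋯y_{i_m} (with i_1,…,i_ℓ ∈ {0,…,k} and i_{ℓ+1},…,i_m ∈ {k+1,…,2k}), call a := i_1+⋯+i_m its total index and β := i_{ℓ+1}+⋯+i_m − k(m−ℓ) its second invariant. Then a finite set S of degree-m monomials is a monomial basis of V_m if and only if: (1) for each a with 0 ≤ a ≤ k or (2m−1)k ≤ a ≤ 2mk, exactly one member of S has total index a; and (2) for each a with k < a < (2m−1)k, exactly two members of S have total index a, and these two members have distinct second invariants. (Lemma 3.8.) -/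
/-!
Lemma 3.8 for the balanced ribbon: a combinatorial characterization of the sets of
degree-`m` monomials in the ribbon variables that form a monomial basis of `V_m`.
A degree-`m` monomial is encoded as an element of `Sym (Fin (2k+1)) m`, i.e. a
multiset of `m` indices; index `i ≤ k` stands for `x_i = u^i` and index
`i ≥ k+1` stands for `y_i = u^i + (i-k)u^(i-k-1)ε`.
-/

noncomputable section

open scoped Classical

/-- The ribbon variable attached to an index `i ∈ {0,…,2k}`. -/
def ribVar (k : ℕ) (i : Fin (2 * k + 1)) : RibR :=
  if (i : ℕ) ≤ k then xvar (i : ℕ) else yvar k (i : ℕ)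

/-- The element of `R` given by a monomial, encoded as a multiset of indices. -/
def monElem (k : ℕ) (σ : Multiset (Fin (2 * k + 1))) : RibR := (σ.map (ribVar k)).prod

/-- `V_m`: the `ℂ`-span of all degree-`m` monomials in the ribbon variables. -/
def ribSpan (k m : ℕ) : Submodule ℂ RibR :=
  Submodule.span ℂ
    {r : RibR | ∃ σ : Multiset (Fin (2 * k + 1)), Multiset.card σ = m ∧ r = monElem k σ}

/-- Degree-`m` monomials, as multisets of `m` indices. -/
abbrev DegMon (k m : ℕ) := Sym (Fin (2 * k + 1)) m

/-- The total index `a = i₁ + ⋯ + i_m` of a monomial. -/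
def totalIdx {k m : ℕ} (σ : DegMon k m) : ℕ :=
  (σ.1.map (fun i : Fin (2 * k + 1) => (i : ℕ))).sum

/-- The second invariant `β = i_{ℓ+1}+⋯+i_m − k(m−ℓ) = Σ_{i > k} (i - k)` of a monomial
(truncated subtraction: indices `≤ k` contribute `0`). -/
def secondInv {k m : ℕ} (σ : DegMon k m) : ℕ :=
  (σ.1.map (fun i : Fin (2 * k + 1) => (i : ℕ) - k)).sum

/-- A finite set of degree-`m` monomials is a monomial basis of `V_m` if its images
in `R` are linearly independent over `ℂ` and span `V_m`. -/
def IsMonomialBasis (k m : ℕ) (S : Finset (DegMon k m)) : Prop :=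
  LinearIndependent ℂ (fun s : S => monElem k (s : DegMon k m).1) ∧
  Submodule.span ℂ ((fun s : DegMon k m => monElem k s.1) '' S) = ribSpan k m


/-!
A monomial with total index `a` and second invariant `b` evaluates to `u^a + b·u^(a-k-1)·ε`,
where `b = 0` whenever `a ≤ k`. Coefficient functionals therefore separate the monomials by their
total index, and those of total index `a` are points of one affine line, parametrised by `b`, in
the plane spanned by `u^a` and `u^(a-k-1)ε`. So a set of monomials is a basis of `V_m` iff for every
`a ≤ 2mk` its members of total index `a` have pairwise distinct `b` and number `min 2 N`, where `N`
is the number of values of `b` taken by all monomials of total index `a`. Finally `N = 1` exactly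
when `a ≤ k` (all indices are `≤ k`, so `b = 0`) or `a ≥ (2m-1)k` (all indices are `≥ k`, so
`b = a - mk`).
-/

open TrivSqZeroExt Polynomial

lemma Sym.sum_map_const {α : Type*} {n : ℕ} (s : Sym α n) (c : ℕ) :
    (s.1.map fun _ => c).sum = n * c := by
  simp [Multiset.map_const']

lemma sum_map_sub_eq_zero_of_sum_le {n k : ℕ} {σ : Multiset (Fin n)}
    (h : (σ.map Fin.val).sum ≤ k) : (σ.map fun i : Fin n => (i : ℕ) - k).sum = 0 :=
  Multiset.sum_eq_zero fun _ hx => by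
    obtain ⟨i, hi, rfl⟩ := Multiset.mem_map.1 hx
    have := Multiset.le_sum_of_mem (Multiset.mem_map_of_mem Fin.val hi)
    omega

lemma sum_le_sum_map_sub_add (t : Multiset ℕ) (k : ℕ) :
    t.sum ≤ (t.map (· - k)).sum + Multiset.card t * k := by
  calc t.sum = (t.map id).sum := by rw [Multiset.map_id]
    _ ≤ (t.map fun x => x - k + k).sum := Multiset.sum_map_le_sum_map _ _ fun x _ => le_tsub_add
    _ = (t.map (· - k)).sum + Multiset.card t * k := by
      rw [Multiset.sum_map_add, Multiset.map_const', Multiset.sum_replicate, smul_eq_mul]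

lemma exists_multiset_card_eq_sum_eq (c : ℕ) :
    ∀ {m a : ℕ}, a ≤ m * c →
      ∃ t : Multiset ℕ, Multiset.card t = m ∧ (∀ x ∈ t, x ≤ c) ∧ t.sum = a
  | 0, a, ha => ⟨0, rfl, by simp, by simp at ha; simp [ha]⟩
  | m + 1, a, ha => by
    obtain ⟨t, hcard, hle, hsum⟩ := exists_multiset_card_eq_sum_eq c (m := m)
      (a := a - min a c) (by rw [add_one_mul] at ha; omega)
    exact ⟨min a c ::ₘ t, by simp [hcard], Multiset.forall_mem_cons.2 ⟨min_le_right a c, hle⟩,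
      by rw [Multiset.sum_cons, hsum]; omega⟩

lemma linearIndependent_of_forall_exists_dual {ι K V : Type*} [Field K] [AddCommGroup V]
    [Module K V] {v : ι → V}
    (h : ∀ i, ∃ φ : Module.Dual K V, φ (v i) ≠ 0 ∧ ∀ j ≠ i, φ (v j) = 0) :
    LinearIndependent K v := by
  choose φ hφ hφ' using h
  refine .of_pairwise_dual_eq_zero_one v (fun i => (φ i (v i))⁻¹ • φ i) (fun i j hij => ?_)
    fun i => ?_
  · simp [hφ' i j hij.symm]
  · simp [hφ i]

lemma add_smul_mem_span_pair {K V : Type*} [Field K] [AddCommGroup V] [Module K V] (e f : V)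
    {b b₁ b₂ : K} (h : b₁ ≠ b₂) : e + b • f ∈ Submodule.span K {e + b₁ • f, e + b₂ • f} := by
  have h' : b₁ - b₂ ≠ 0 := sub_ne_zero.2 h
  refine Submodule.mem_span_pair.2 ⟨(b - b₂) / (b₁ - b₂), (b₁ - b) / (b₁ - b₂), ?_⟩
  match_scalars <;> field_simp <;> ring

lemma ribVar_eq (k : ℕ) (i : Fin (2 * k + 1)) :
    ribVar k i = inl (X ^ (i : ℕ)) + (((i : ℕ) - k : ℕ) : ℂ) • inr (X ^ ((i : ℕ) - k - 1)) := by
  unfold ribVar xvar yvar uPoly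
  split_ifs with h
  · simp [Nat.sub_eq_zero_of_le h]
  · ext <;> simp [Polynomial.smul_eq_C_mul]

lemma monElem_eq_sum (k : ℕ) (σ : Multiset (Fin (2 * k + 1))) :
    monElem k σ = inl (X ^ (σ.map Fin.val).sum) +
      ((σ.map fun i : Fin (2 * k + 1) => (i : ℕ) - k).sum : ℂ) •
        inr (X ^ ((σ.map Fin.val).sum - k - 1)) := by
  induction σ using Multiset.induction_on with
  | empty => simp [monElem]
  | cons i σ ih =>
    rw [monElem, Multiset.map_cons, Multiset.prod_cons, ← monElem, ih, ribVar_eq]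
    have hσ : (σ.map fun i : Fin (2 * k + 1) => (i : ℕ) - k).sum = 0 ∨
        k < (σ.map Fin.val).sum := by
      by_cases h : (σ.map Fin.val).sum ≤ k
      · exact .inl (sum_map_sub_eq_zero_of_sum_le h)
      · exact .inr (by omega)
    have hi : (i : ℕ) - k = 0 ∨ k < i := by omega
    refine TrivSqZeroExt.ext (by simp [pow_add]) ?_
    simp only [Multiset.map_cons, Multiset.sum_cons, snd_mul, fst_add, snd_add, fst_inl, snd_inl,
      fst_smul, snd_smul, fst_inr, snd_inr, smul_zero, add_zero, zero_add, smul_eq_mul,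
      op_smul_eq_mul, Nat.cast_add, add_smul, mul_smul_comm, smul_mul_assoc, ← pow_add]
    rw [add_comm]
    congr 1
    · rcases hi with hi | hi
      · simp only [hi, Nat.cast_zero, zero_smul]
      · congr 2; omega
    · rcases hσ with hσ | hσ
      · simp only [hσ, Nat.cast_zero, zero_smul]
      · congr 2; omega

section Invariants

variable {k m : ℕ}

lemma monElem_eq (s : DegMon k m) :
    monElem k s.1 = inl (X ^ totalIdx s) + (secondInv s : ℂ) • inr (X ^ (totalIdx s - k - 1)) :=
  monElem_eq_sum k s.1

lemma monElem_eq_monElem {s t : DegMon k m} (hA : totalIdx s = totalIdx t)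
    (hB : secondInv s = secondInv t) : monElem k s.1 = monElem k t.1 := by
  rw [monElem_eq, monElem_eq, hA, hB]

lemma secondInv_eq_zero_of_totalIdx_le {s : DegMon k m} (h : totalIdx s ≤ k) :
    secondInv s = 0 :=
  sum_map_sub_eq_zero_of_sum_le h

lemma totalIdx_le (s : DegMon k m) : totalIdx s ≤ 2 * m * k := by
  calc totalIdx s ≤ (s.1.map fun _ => 2 * k).sum :=
        Multiset.sum_map_le_sum_map _ _ fun i _ => Nat.lt_succ_iff.1 i.2
    _ = 2 * m * k := by rw [Sym.sum_map_const]; ring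

lemma secondInv_add_mul_eq_totalIdx {s : DegMon k m} (h : (2 * m - 1) * k ≤ totalIdx s) :
    secondInv s + m * k = totalIdx s := by
  have hdefect : (s.1.map fun i : Fin (2 * k + 1) => 2 * k - (i : ℕ)).sum + totalIdx s =
      m * (2 * k) := by
    rw [totalIdx, ← Multiset.sum_map_add, ← Sym.sum_map_const s]
    exact congrArg _ (Multiset.map_congr rfl fun i _ => Nat.sub_add_cancel (Nat.lt_succ_iff.1 i.2))
  have hk : ∀ i ∈ s.1, k ≤ (i : ℕ) := fun i hi => by
    have hi_le := Multiset.le_sum_of_mem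
      (Multiset.mem_map_of_mem (fun i : Fin (2 * k + 1) => 2 * k - (i : ℕ)) hi)
    have hm : 0 < m := s.2 ▸ Multiset.card_pos_iff_exists_mem.2 ⟨i, hi⟩
    have hmk : (2 * m - 1) * k + k = m * (2 * k) := by
      rw [← Nat.succ_mul, Nat.succ_eq_add_one, Nat.sub_add_cancel (by omega)]; ring
    omega
  rw [secondInv, totalIdx, ← Sym.sum_map_const s k, ← Multiset.sum_map_add]
  exact congrArg _ (Multiset.map_congr rfl fun i hi => Nat.sub_add_cancel (hk i hi))

lemma exists_degMon_of_multiset {t : Multiset ℕ} (hcard : Multiset.card t = m)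
    (hle : ∀ x ∈ t, x ≤ 2 * k) :
    ∃ s : DegMon k m, totalIdx s = t.sum ∧ secondInv s = (t.map (· - k)).sum := by
  lift t to Multiset (Fin (2 * k + 1)) using fun x hx => Nat.lt_succ_of_le (hle x hx)
  exact ⟨⟨t, by simpa using hcard⟩, rfl, by simp [secondInv, Multiset.map_map]⟩

lemma exists_totalIdx_eq {a : ℕ} (ha : a ≤ 2 * m * k) : ∃ s : DegMon k m, totalIdx s = a := by
  obtain ⟨t, hcard, hle, hsum⟩ := exists_multiset_card_eq_sum_eq (2 * k) (ha.trans_eq (by ring))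
  obtain ⟨s, hs, -⟩ := exists_degMon_of_multiset (k := k) hcard hle
  exact ⟨s, hs.trans hsum⟩

/- In the next two lemmas `s` has all indices `≤ k` (so its second invariant is `0`), resp. all
indices `≥ k` (so it is `a - mk`); the index `k + 1`, resp. `k - 1`, of `t` moves it off that
value. -/

lemma exists_secondInv_ne_of_le {a : ℕ} (h₁ : k < a) (h₂ : a ≤ m * k) :
    ∃ s t : DegMon k m, totalIdx s = a ∧ totalIdx t = a ∧ secondInv s ≠ secondInv t := by
  have hm : 1 ≤ m := Nat.pos_of_ne_zero (by rintro rfl; omega)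
  have hk : 1 ≤ k := Nat.pos_of_ne_zero (by rintro rfl; omega)
  have hmk : (m - 1) * k + k = m * k := by
    rw [← Nat.succ_mul, Nat.succ_eq_add_one, Nat.sub_add_cancel hm]
  have hmk₂ : (m - 1) * k ≤ (m - 1) * (2 * k) := Nat.mul_le_mul_left _ (by omega)
  obtain ⟨t₁, hcard₁, hle₁, hsum₁⟩ := exists_multiset_card_eq_sum_eq k h₂
  obtain ⟨u, hcard, hle, hsum⟩ :=
    exists_multiset_card_eq_sum_eq (2 * k) (m := m - 1) (a := a - (k + 1)) (by omega)
  obtain ⟨s, hAs, hBs⟩ := exists_degMon_of_multiset (k := k) hcard₁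
    fun x hx => (hle₁ x hx).trans (by omega)
  obtain ⟨t, hAt, hBt⟩ := exists_degMon_of_multiset (k := k) (m := m) (t := (k + 1) ::ₘ u)
    (by simp [hcard]; omega) (Multiset.forall_mem_cons.2 ⟨by omega, hle⟩)
  refine ⟨s, t, hAs.trans hsum₁, by rw [hAt, Multiset.sum_cons, hsum]; omega, ?_⟩
  rw [hBs, hBt, Multiset.sum_eq_zero fun x hx => ?_]
  · simp only [Multiset.map_cons, Multiset.sum_cons]; omega
  · obtain ⟨y, hy, rfl⟩ := Multiset.mem_map.1 hx
    exact Nat.sub_eq_zero_of_le (hle₁ y hy)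

lemma exists_secondInv_ne_of_lt {a : ℕ} (h₁ : m * k < a) (h₂ : a < (2 * m - 1) * k) :
    ∃ s t : DegMon k m, totalIdx s = a ∧ totalIdx t = a ∧ secondInv s ≠ secondInv t := by
  have hm : 1 ≤ m := Nat.pos_of_ne_zero (by rintro rfl; simp at h₂)
  have hk : 1 ≤ k := Nat.pos_of_ne_zero (by rintro rfl; simp at h₂)
  have e₁ : (2 * m - 1) * k + k = 2 * (m * k) := by
    rw [← Nat.succ_mul, Nat.succ_eq_add_one, Nat.sub_add_cancel (by omega)]; ring
  have e₂ : (m - 1) * (2 * k) + 2 * k = 2 * (m * k) := by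
    rw [← Nat.succ_mul, Nat.succ_eq_add_one, Nat.sub_add_cancel hm]; ring
  have e₃ : (m - 1) * k + k = m * k := by
    rw [← Nat.succ_mul, Nat.succ_eq_add_one, Nat.sub_add_cancel hm]
  obtain ⟨t₁, hcard₁, hle₁, hsum₁⟩ :=
    exists_multiset_card_eq_sum_eq k (m := m) (a := a - m * k) (by omega)
  obtain ⟨u, hcard, hle, hsum⟩ :=
    exists_multiset_card_eq_sum_eq (2 * k) (m := m - 1) (a := a - (k - 1)) (by omega)
  obtain ⟨s, hAs, hBs⟩ := exists_degMon_of_multiset (k := k) (m := m) (t := t₁.map (· + k))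
    (by simp [hcard₁]) (by simpa using fun x hx => by have := hle₁ x hx; omega)
  obtain ⟨t, hAt, hBt⟩ := exists_degMon_of_multiset (k := k) (m := m) (t := (k - 1) ::ₘ u)
    (by simp [hcard]; omega) (Multiset.forall_mem_cons.2 ⟨by omega, hle⟩)
  have hu := sum_le_sum_map_sub_add u k
  rw [hcard] at hu
  refine ⟨s, t, ?_, by rw [hAt, Multiset.sum_cons, hsum]; omega, ?_⟩
  · rw [hAs, Multiset.sum_map_add, Multiset.map_id', hsum₁]; simp [hcard₁]; omega
  · rw [hBs, hBt, Multiset.map_map]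
    simp [hsum₁]
    omega

end Invariants

section Levels

variable {k m : ℕ}

def IsRigidLevel (k m a : ℕ) : Prop :=
  ∀ s t : DegMon k m, totalIdx s = a → totalIdx t = a → secondInv s = secondInv t

lemma isRigidLevel_iff {a : ℕ} : IsRigidLevel k m a ↔ a ≤ k ∨ (2 * m - 1) * k ≤ a := by
  refine ⟨fun h => ?_, ?_⟩
  · by_contra! h'
    obtain ⟨s, t, hs, ht, hne⟩ := (le_or_gt a (m * k)).elim
      (exists_secondInv_ne_of_le h'.1) (exists_secondInv_ne_of_lt · h'.2)
    exact hne (h s t hs ht)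
  · rintro (h | h) s t rfl ht
    · rw [secondInv_eq_zero_of_totalIdx_le h, secondInv_eq_zero_of_totalIdx_le (ht ▸ h)]
    · have hs := secondInv_add_mul_eq_totalIdx h
      have ht := secondInv_add_mul_eq_totalIdx (ht ▸ h)
      omega

def level (S : Finset (DegMon k m)) (a : ℕ) : Finset (DegMon k m) :=
  S.filter fun s => totalIdx s = a

@[simp]
lemma mem_level {S : Finset (DegMon k m)} {a : ℕ} {s : DegMon k m} :
    s ∈ level S a ↔ s ∈ S ∧ totalIdx s = a :=
  Finset.mem_filter

lemma level_eq_empty {S : Finset (DegMon k m)} {a : ℕ} (ha : 2 * m * k < a) : level S a = ∅ :=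
  Finset.filter_eq_empty_iff.2 fun s _ => ((totalIdx_le s).trans_lt ha).ne

end Levels

section Functionals

def coeffFst (a : ℕ) : Module.Dual ℂ RibR :=
  lcoeff ℂ a ∘ₗ (fstHom ℂ ℂ[X] ℂ[X]).toLinearMap

def levelFunctional (k a : ℕ) (b : ℂ) : Module.Dual ℂ RibR :=
  lcoeff ℂ (a - k - 1) ∘ₗ (sndHom ℂ[X] ℂ[X]).restrictScalars ℂ - b • coeffFst a

variable {k m : ℕ}

lemma coeffFst_monElem (a : ℕ) (s : DegMon k m) :
    coeffFst a (monElem k s.1) = if totalIdx s = a then 1 else 0 := by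
  rw [monElem_eq]
  simp [coeffFst, coeff_X_pow, eq_comm]

lemma levelFunctional_monElem {a : ℕ} (ha : k < a) (b : ℂ) (s : DegMon k m) :
    levelFunctional k a b (monElem k s.1) =
      if totalIdx s = a then (secondInv s : ℂ) - b else 0 := by
  rw [levelFunctional, LinearMap.sub_apply, LinearMap.smul_apply, coeffFst_monElem, monElem_eq]
  by_cases hs : totalIdx s = a
  · simp [hs]
  · by_cases hlow : totalIdx s ≤ k
    · simp [hs, secondInv_eq_zero_of_totalIdx_le hlow]
    · simp [hs, coeff_X_pow]
      omega

end Functionals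

section LinearIndependence

variable {k m : ℕ} {S : Finset (DegMon k m)}

lemma LinearIndependent.injOn_secondInv_level
    (h : LinearIndependent ℂ fun s : S => monElem k (s : DegMon k m).1) (a : ℕ) :
    Set.InjOn secondInv (level S a : Set (DegMon k m)) := fun s hs t ht hst => by
  rw [Finset.mem_coe, mem_level] at hs ht
  have := h.injective (a₁ := ⟨s, hs.1⟩) (a₂ := ⟨t, ht.1⟩)
    (monElem_eq_monElem (hs.2.trans ht.2.symm) hst)
  exact congrArg Subtype.val this

/-- The monomials of total index `a` lie in the plane spanned by `u^a` and `u^(a-k-1)ε`. -/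
lemma LinearIndependent.card_level_le_two
    (h : LinearIndependent ℂ fun s : S => monElem k (s : DegMon k m).1) (a : ℕ) :
    (level S a).card ≤ 2 := by
  have hincl : Function.Injective fun s : level S a => (⟨s.1, (mem_level.1 s.2).1⟩ : S) :=
    fun s t hst => Subtype.ext (congrArg Subtype.val hst :)
  have hlevel : LinearIndependent ℂ fun s : level S a => monElem k (s : DegMon k m).1 := by
    have := h.comp _ hincl
    exact this
  let w : Finset RibR := {inl (X ^ a), inr (X ^ (a - k - 1))}
  have hrange : Set.range (fun s : level S a => monElem k (s : DegMon k m).1) ≤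
      Submodule.span ℂ (w : Set RibR) := by
    rintro _ ⟨s, rfl⟩
    show monElem k (s : DegMon k m).1 ∈ Submodule.span ℂ (w : Set RibR)
    rw [monElem_eq, (mem_level.1 s.2).2]
    exact add_mem (Submodule.subset_span (by simp [w]))
      (Submodule.smul_mem _ _ (Submodule.subset_span (by simp [w])))
  calc (level S a).card = Fintype.card (level S a) := (Fintype.card_coe _).symm
    _ ≤ Fintype.card (w : Set RibR) := linearIndependent_le_span_aux' _ hlevel _ hrange
    _ = w.card := Fintype.card_coe w
    _ ≤ 2 := Finset.card_le_two

lemma linearIndependent_of_levels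
    (h : ∀ a, (level S a).card ≤ 2 ∧ Set.InjOn secondInv (level S a : Set (DegMon k m))) :
    LinearIndependent ℂ fun s : S => monElem k (s : DegMon k m).1 := by
  refine linearIndependent_of_forall_exists_dual fun s => ?_
  set a := totalIdx s.1
  have hs : s.1 ∈ level S a := mem_level.2 ⟨s.2, rfl⟩
  by_cases hsingle : ∀ t ∈ level S a, t = s.1
  · refine ⟨coeffFst a, by rw [coeffFst_monElem, if_pos rfl]; exact one_ne_zero,
      fun t hts => ?_⟩
    rw [coeffFst_monElem, if_neg]
    exact fun hta => hts (Subtype.ext (hsingle t.1 (mem_level.2 ⟨t.2, hta⟩)))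
  push Not at hsingle
  obtain ⟨t₀, ht₀, ht₀s⟩ := hsingle
  have hB : secondInv s.1 ≠ secondInv t₀ := fun hB => ht₀s ((h a).2 ht₀ hs hB.symm)
  have ha : k < a := by
    by_contra! ha
    exact hB (by rw [secondInv_eq_zero_of_totalIdx_le ha,
      secondInv_eq_zero_of_totalIdx_le ((mem_level.1 ht₀).2.trans_le ha)])
  have hpair : level S a = {s.1, t₀} :=
    (Finset.eq_of_subset_of_card_le (Finset.insert_subset hs (by simpa using ht₀))
      ((h a).1.trans_eq (Finset.card_pair (Ne.symm ht₀s)).symm)).symm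
  refine ⟨levelFunctional k a (secondInv t₀), ?_, fun t hts => ?_⟩
  · rw [levelFunctional_monElem ha, if_pos rfl]
    exact sub_ne_zero.2 (by exact_mod_cast hB)
  · rw [levelFunctional_monElem ha]
    split_ifs with hta
    · have : t.1 ∈ level S a := mem_level.2 ⟨t.2, hta⟩
      rw [hpair, Finset.mem_insert, Finset.mem_singleton] at this
      rcases this with h | h
      · exact absurd (Subtype.ext h) hts
      · rw [h, sub_self]
    · rfl

lemma linearIndependent_iff_levels :
    (LinearIndependent ℂ fun s : S => monElem k (s : DegMon k m).1) ↔
      ∀ a, (level S a).card ≤ 2 ∧ Set.InjOn secondInv (level S a : Set (DegMon k m)) :=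
  ⟨fun h a => ⟨h.card_level_le_two a, h.injOn_secondInv_level a⟩, linearIndependent_of_levels⟩

end LinearIndependence

section Span

variable {k m : ℕ} {S : Finset (DegMon k m)}

lemma ribSpan_eq_span_range :
    ribSpan k m = Submodule.span ℂ (Set.range fun s : DegMon k m => monElem k s.1) := by
  unfold ribSpan
  congr 1
  ext r
  exact ⟨fun ⟨σ, hσ, hr⟩ => ⟨⟨σ, hσ⟩, hr.symm⟩, fun ⟨s, hs⟩ => ⟨s.1, s.2, hs.symm⟩⟩

lemma span_eq_ribSpan_iff :
    Submodule.span ℂ ((fun s : DegMon k m => monElem k s.1) '' S) = ribSpan k m ↔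
      ∀ σ : DegMon k m,
        monElem k σ.1 ∈ Submodule.span ℂ ((fun s : DegMon k m => monElem k s.1) '' S) := by
  rw [ribSpan_eq_span_range]
  refine ⟨fun h σ => h ▸ Submodule.subset_span ⟨σ, rfl⟩, fun h => le_antisymm ?_ ?_⟩
  · exact Submodule.span_mono (Set.image_subset_range _ _)
  · exact Submodule.span_le.2 (Set.range_subset_iff.2 h)

lemma apply_monElem_eq_zero_of_span_eq
    (hspan : Submodule.span ℂ ((fun s : DegMon k m => monElem k s.1) '' S) = ribSpan k m)
    {φ : Module.Dual ℂ RibR} (hφ : ∀ s ∈ S, φ (monElem k s.1) = 0) (σ : DegMon k m) :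
    φ (monElem k σ.1) = 0 := by
  have hker : Submodule.span ℂ ((fun s : DegMon k m => monElem k s.1) '' S) ≤ LinearMap.ker φ :=
    Submodule.span_le.2 (Set.image_subset_iff.2 hφ)
  exact hker (span_eq_ribSpan_iff.1 hspan σ)

lemma span_eq_ribSpan_iff_levels :
    Submodule.span ℂ ((fun s : DegMon k m => monElem k s.1) '' S) = ribSpan k m ↔
      ∀ a ≤ 2 * m * k, (level S a).Nonempty ∧
        (¬ IsRigidLevel k m a → ∃ s ∈ level S a, ∃ t ∈ level S a, secondInv s ≠ secondInv t) := by
  constructor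
  · intro hspan a ha
    have hne : (level S a).Nonempty := by
      by_contra hempty
      obtain ⟨σ, hσ⟩ := exists_totalIdx_eq (k := k) (m := m) ha
      have := apply_monElem_eq_zero_of_span_eq hspan (φ := coeffFst a)
        (fun s hs => by
          rw [coeffFst_monElem, if_neg]
          exact fun hsa => hempty ⟨s, mem_level.2 ⟨hs, hsa⟩⟩) σ
      rw [coeffFst_monElem, if_pos hσ] at this
      exact one_ne_zero this
    refine ⟨hne, fun hr => ?_⟩
    simp only [IsRigidLevel, not_forall] at hr
    obtain ⟨σ, τ, hσ, hτ, hστ⟩ := hr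
    have ha : k < a := by
      by_contra! ha
      exact hστ (by rw [secondInv_eq_zero_of_totalIdx_le (hσ ▸ ha),
        secondInv_eq_zero_of_totalIdx_le (hτ ▸ ha)])
    by_contra! hall
    obtain ⟨s₀, hs₀⟩ := hne
    have hvanish := apply_monElem_eq_zero_of_span_eq hspan
      (φ := levelFunctional k a (secondInv s₀)) fun s hs => by
        rw [levelFunctional_monElem ha]
        split_ifs with hsa
        · rw [hall s (mem_level.2 ⟨hs, hsa⟩) s₀ hs₀, sub_self]
        · rfl
    have h₁ := hvanish σ
    have h₂ := hvanish τ
    rw [levelFunctional_monElem ha, if_pos hσ, sub_eq_zero] at h₁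
    rw [levelFunctional_monElem ha, if_pos hτ, sub_eq_zero] at h₂
    exact hστ (by exact_mod_cast h₁.trans h₂.symm)
  · intro h
    refine span_eq_ribSpan_iff.2 fun σ => ?_
    obtain ⟨⟨s, hs⟩, hpair⟩ := h (totalIdx σ) (totalIdx_le σ)
    rw [mem_level] at hs
    by_cases hr : IsRigidLevel k m (totalIdx σ)
    · rw [monElem_eq_monElem hs.2.symm (hr σ s rfl hs.2)]
      exact Submodule.subset_span ⟨s, hs.1, rfl⟩
    obtain ⟨s, hs, t, ht, hst⟩ := hpair hr
    rw [mem_level] at hs ht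
    have hsub : {monElem k s.1, monElem k t.1} ⊆ (fun s : DegMon k m => monElem k s.1) '' S :=
      Set.insert_subset_iff.2 ⟨⟨s, hs.1, rfl⟩, Set.singleton_subset_iff.2 ⟨t, ht.1, rfl⟩⟩
    refine Submodule.span_mono hsub ?_
    rw [monElem_eq σ, monElem_eq s, monElem_eq t, hs.2, ht.2]
    exact add_smul_mem_span_pair _ _ (by exact_mod_cast hst)

end Span

lemma isMonomialBasis_iff_levels {k m : ℕ} (S : Finset (DegMon k m)) :
    IsMonomialBasis k m S ↔ ∀ a ≤ 2 * m * k,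
      (IsRigidLevel k m a → (level S a).card = 1) ∧
      (¬ IsRigidLevel k m a →
        (level S a).card = 2 ∧ Set.InjOn secondInv (level S a : Set (DegMon k m))) := by
  rw [IsMonomialBasis, linearIndependent_iff_levels, span_eq_ribSpan_iff_levels]
  constructor
  · rintro ⟨hli, hspan⟩ a ha
    obtain ⟨hcard, hinj⟩ := hli a
    obtain ⟨hne, hpair⟩ := hspan a ha
    refine ⟨fun hr => le_antisymm (Finset.card_le_one.2 fun s hs t ht => hinj hs ht
      (hr s t (mem_level.1 hs).2 (mem_level.1 ht).2)) hne.card_pos,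
      fun hr => ⟨le_antisymm hcard ?_, hinj⟩⟩
    obtain ⟨s, hs, t, ht, hst⟩ := hpair hr
    exact Finset.one_lt_card.2 ⟨s, hs, t, ht, ne_of_apply_ne _ hst⟩
  · intro h
    refine ⟨fun a => ?_, fun a ha => ?_⟩
    · by_cases ha : a ≤ 2 * m * k
      · by_cases hr : IsRigidLevel k m a
        · have hcard := (h a ha).1 hr
          exact ⟨by omega, fun s hs t ht _ => Finset.card_le_one.1 hcard.le s hs t ht⟩
        · obtain ⟨hcard, hinj⟩ := (h a ha).2 hr
          exact ⟨by omega, hinj⟩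
      · simp [level_eq_empty (S := S) (not_le.1 ha)]
    · by_cases hr : IsRigidLevel k m a
      · exact ⟨Finset.card_pos.1 (by rw [(h a ha).1 hr]; omega), fun h' => absurd hr h'⟩
      · obtain ⟨hcard, hinj⟩ := (h a ha).2 hr
        obtain ⟨s, t, hst, hpair⟩ := Finset.card_eq_two.1 hcard
        refine ⟨⟨s, by simp [hpair]⟩, fun _ => ⟨s, by simp [hpair], t, by simp [hpair],
          fun hB => hst (hinj (by simp [hpair]) (by simp [hpair]) hB)⟩⟩

theorem ribbon_monomial_basis_criterion_general (k m : ℕ) (hm : 2 ≤ m)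
    (S : Finset (DegMon k m)) :
    IsMonomialBasis k m S ↔
      ((∀ a : ℕ, (a ≤ k ∨ ((2 * m - 1) * k ≤ a ∧ a ≤ 2 * m * k)) →
          (S.filter (fun σ => totalIdx σ = a)).card = 1) ∧
       (∀ a : ℕ, k < a → a < (2 * m - 1) * k →
          (S.filter (fun σ => totalIdx σ = a)).card = 2 ∧
          ∀ σ ∈ S, ∀ τ ∈ S, totalIdx σ = a → totalIdx τ = a → σ ≠ τ →
            secondInv σ ≠ secondInv τ)) := by
  have hk : k ≤ 2 * m * k := Nat.le_mul_of_pos_left k (by omega)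
  have h2m : (2 * m - 1) * k ≤ 2 * m * k := Nat.mul_le_mul_right k (Nat.sub_le _ _)
  simp only [isMonomialBasis_iff_levels, isRigidLevel_iff]
  constructor
  · intro h
    refine ⟨fun a ha => (h a (by omega)).1 (by omega), fun a ha₁ ha₂ => ?_⟩
    obtain ⟨hcard, hinj⟩ := (h a (by omega)).2 (by omega)
    exact ⟨hcard, fun σ hσ τ hτ hσa hτa hne hB =>
      hne (hinj (mem_level.2 ⟨hσ, hσa⟩) (mem_level.2 ⟨hτ, hτa⟩) hB)⟩
  · rintro ⟨hout, hmid⟩ a ha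
    refine ⟨fun hr => hout a (by omega), fun hr => ?_⟩
    obtain ⟨hcard, hdist⟩ := hmid a (by omega) (by omega)
    refine ⟨hcard, fun σ hσ τ hτ hB => ?_⟩
    rw [Finset.mem_coe, mem_level] at hσ hτ
    by_contra hne
    exact hdist σ hσ.1 τ hτ.1 hσ.2 hτ.2 hne hB

/-- Lemma 3.8. -/
theorem ribbon_monomial_basis_criterion (k m : ℕ) (hk : 1 ≤ k) (hm : 2 ≤ m)
    (S : Finset (DegMon k m)) :
    IsMonomialBasis k m S ↔
      ((∀ a : ℕ, (a ≤ k ∨ ((2 * m - 1) * k ≤ a ∧ a ≤ 2 * m * k)) →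
          (S.filter (fun σ => totalIdx σ = a)).card = 1) ∧
       (∀ a : ℕ, k < a → a < (2 * m - 1) * k →
          (S.filter (fun σ => totalIdx σ = a)).card = 2 ∧
          ∀ σ ∈ S, ∀ τ ∈ S, totalIdx σ = a → totalIdx τ = a → σ ≠ τ →
            secondInv σ ≠ secondInv τ)) :=
  ribbon_monomial_basis_criterion_general k m hm S

end
end

section
/- Let m ≥ 3 and g = 2k+1 ≥ 3. Define linear forms in ρ = (ρ_0,…,ρ_{2k}) ∈ ℤ^{2k+1}: W₁⁺(ρ) = ((m−1)²(g−1)−(2m−3))·ρ_k + (m(m−1)(g−1)/2 − 1)·(ρ_0+ρ_{2k}); W₂⁺(ρ) = ((m−1)(g−1)+(2m−5))·ρ_k + ((m−1)²(g−1)−(2m−3))·(ρ_0+ρ_{2k}); and W⁻(ρ) = −(m²−3m+5)·(ρ_0+ρ_{2k}) − (5m−10)·ρ_k if m is odd, W⁻(ρ) = −(m²−3m+6)·(ρ_0+ρ_{2k}) − (5m−12)·ρ_k if m is even. Then there exist positive rational numbers c₀, c₁, c₂ such that c₀·W⁻(ρ) + c₁·W₁⁺(ρ) + c₂·W₂⁺(ρ)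 = 0 for every ρ ∈ ℤ^{2k+1} with ρ_0+⋯+ρ_{2k} = 0. (Lemma 4.8; these three forms are the ρ-weights of the monomial bases B⁻, B₁⁺, B₂⁺ of V_m.) -/
/-!
Each of the three forms depends on `ρ` only through `ρ_k` and `ρ₀ + ρ_{2k}`, so it is given by a
coefficient vector in `ℚ²`, and any three plane vectors satisfy Cramer's identity
`cross v w • u + cross w u • v + cross u v • w = 0`. With `n = k (m - 1)` the three cross products
are `2m - 1` times polynomials in `m, n` that are positive for `m ≥ 3`, `n ≥ m - 1`, `n > 2`. The
only excluded case `k = 1, m = 3` has all three forms proportional.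
-/

/-- `W₁⁺(ρ) = ((m−1)²(g−1)−(2m−3))·ρ_k + (m(m−1)(g−1)/2 − 1)·(ρ₀+ρ_{2k})`, with `g-1 = 2k`. -/
noncomputable def W1plus (k m : ℕ) (hk : 1 ≤ k) (ρ : Fin (2 * k + 1) → ℤ) : ℚ :=
  (((m : ℚ) - 1) ^ 2 * (2 * k) - (2 * m - 3)) * (ρ ⟨k, by omega⟩ : ℤ) +
    ((m : ℚ) * ((m : ℚ) - 1) * (2 * k) / 2 - 1) *
      ((ρ ⟨0, by omega⟩ : ℤ) + (ρ ⟨2 * k, by omega⟩ : ℤ))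

/-- `W₂⁺(ρ) = ((m−1)(g−1)+(2m−5))·ρ_k + ((m−1)²(g−1)−(2m−3))·(ρ₀+ρ_{2k})`, with `g-1 = 2k`. -/
noncomputable def W2plus (k m : ℕ) (hk : 1 ≤ k) (ρ : Fin (2 * k + 1) → ℤ) : ℚ :=
  (((m : ℚ) - 1) * (2 * k) + (2 * m - 5)) * (ρ ⟨k, by omega⟩ : ℤ) +
    (((m : ℚ) - 1) ^ 2 * (2 * k) - (2 * m - 3)) *
      ((ρ ⟨0, by omega⟩ : ℤ) + (ρ ⟨2 * k, by omega⟩ : ℤ))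

/-- `W⁻(ρ) = −(m²−3m+5)(ρ₀+ρ_{2k}) − (5m−10)ρ_k` if `m` is odd, and
`W⁻(ρ) = −(m²−3m+6)(ρ₀+ρ_{2k}) − (5m−12)ρ_k` if `m` is even. -/
noncomputable def Wminus (k m : ℕ) (hk : 1 ≤ k) (ρ : Fin (2 * k + 1) → ℤ) : ℚ :=
  if Odd m then
    -((m : ℚ) ^ 2 - 3 * m + 5) * ((ρ ⟨0, by omega⟩ : ℤ) + (ρ ⟨2 * k, by omega⟩ : ℤ)) -
      (5 * (m : ℚ) - 10) * (ρ ⟨k, by omega⟩ : ℤ)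
  else
    -((m : ℚ) ^ 2 - 3 * m + 6) * ((ρ ⟨0, by omega⟩ : ℤ) + (ρ ⟨2 * k, by omega⟩ : ℤ)) -
      (5 * (m : ℚ) - 12) * (ρ ⟨k, by omega⟩ : ℤ)

def cross {R : Type*} [CommRing R] (u v : R × R) : R := u.1 * v.2 - u.2 * v.1

theorem exists_pos_combination_eq_zero_of_cross_pos {R : Type*} [CommRing R] [PartialOrder R]
    {u v w : R × R} (hvw : 0 < cross v w) (hwu : 0 < cross w u) (huv : 0 < cross u v) :
    ∃ a b c : R, 0 < a ∧ 0 < b ∧ 0 < c ∧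
      ∀ x y : R, a * (u.1 * x + u.2 * y) + b * (v.1 * x + v.2 * y) + c * (w.1 * x + w.2 * y) = 0 :=
  ⟨_, _, _, hvw, hwu, huv, fun x y => by simp only [cross]; ring⟩

def WminusCoeffs (m : ℕ) : ℚ × ℚ :=
  if Odd m then (-(5 * m - 10), -((m : ℚ) ^ 2 - 3 * m + 5))
  else (-(5 * m - 12), -((m : ℚ) ^ 2 - 3 * m + 6))

-- `n` stands for `k (m - 1)`: the coefficients of `W₁⁺` and `W₂⁺` depend on `k` only through it.
def W1plusCoeffs (m n : ℚ) : ℚ × ℚ := (2 * (m - 1) * n - (2 * m - 3), m * n - 1)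

def W2plusCoeffs (m n : ℚ) : ℚ × ℚ := (2 * n + 2 * m - 5, 2 * (m - 1) * n - (2 * m - 3))

section Forms

variable (k m : ℕ) (hk : 1 ≤ k) (ρ : Fin (2 * k + 1) → ℤ)

theorem Wminus_eq_coeffs :
    Wminus k m hk ρ = (WminusCoeffs m).1 * ρ ⟨k, by omega⟩ +
      (WminusCoeffs m).2 * ((ρ ⟨0, by omega⟩ : ℚ) + ρ ⟨2 * k, by omega⟩) := by
  unfold Wminus WminusCoeffs
  split_ifs <;> ring

theorem W1plus_eq_coeffs :
    W1plus k m hk ρ = (W1plusCoeffs m (k * (m - 1))).1 * ρ ⟨k, by omega⟩ +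
      (W1plusCoeffs m (k * (m - 1))).2 * ((ρ ⟨0, by omega⟩ : ℚ) + ρ ⟨2 * k, by omega⟩) := by
  unfold W1plus W1plusCoeffs
  ring

theorem W2plus_eq_coeffs :
    W2plus k m hk ρ = (W2plusCoeffs m (k * (m - 1))).1 * ρ ⟨k, by omega⟩ +
      (W2plusCoeffs m (k * (m - 1))).2 * ((ρ ⟨0, by omega⟩ : ℚ) + ρ ⟨2 * k, by omega⟩) := by
  unfold W2plus W2plusCoeffs
  ring

end Forms

theorem cross_W1plusCoeffs_W2plusCoeffs_pos {m n : ℚ} (hm : 3 ≤ m) (hn : 2 < n) :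
    0 < cross (W1plusCoeffs m n) (W2plusCoeffs m n) := by
  have h : cross (W1plusCoeffs m n) (W2plusCoeffs m n) =
      (2 * m - 1) * (m - 2) * (2 * n - 1) * (n - 2) := by
    simp only [cross, W1plusCoeffs, W2plusCoeffs]; ring
  rw [h]
  have : 0 < m - 2 := by linarith
  have : 0 < n - 2 := by linarith
  have : 0 < 2 * n - 1 := by linarith
  have : 0 < 2 * m - 1 := by linarith
  positivity

theorem cross_W2plusCoeffs_WminusCoeffs_pos {m : ℕ} {n : ℚ} (hm : 3 ≤ m) (hmn : (m : ℚ) - 1 ≤ n)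
    (hn : 2 < n) : 0 < cross (W2plusCoeffs m n) (WminusCoeffs m) := by
  obtain rfl | hm4 := hm.eq_or_lt
  · simp only [cross, W2plusCoeffs, WminusCoeffs, if_pos (by decide : Odd 3)]
    push_cast
    linarith
  have hm4 : (4 : ℚ) ≤ m := by exact_mod_cast hm4
  have hd : 0 ≤ n - (m - 1) := by linarith
  simp only [cross, W2plusCoeffs, WminusCoeffs]
  split_ifs
  · have h : 0 < 2 * (2 * m - 5) * (n - (m - 1)) + (3 * m - 5) * (m - 3) := by
      nlinarith [mul_nonneg (by linarith : (0 : ℚ) ≤ 2 * m - 5) hd]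
    linear_combination mul_pos (by linarith : (0 : ℚ) < 2 * m - 1) h
  · have h : 0 < 4 * (m - 3) * (n - (m - 1)) + (3 * m - 4) * (m - 4) + 2 := by
      nlinarith [mul_nonneg (by linarith : (0 : ℚ) ≤ m - 3) hd]
    linear_combination mul_pos (by linarith : (0 : ℚ) < 2 * m - 1) h

theorem cross_WminusCoeffs_W1plusCoeffs_pos {m : ℕ} {n : ℚ} (hm : 3 ≤ m) (hmn : (m : ℚ) - 1 ≤ n)
    (hn : 2 < n) : 0 < cross (WminusCoeffs m) (W1plusCoeffs m n) := by
  obtain rfl | hm4 := hm.eq_or_lt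
  · simp only [cross, W1plusCoeffs, WminusCoeffs, if_pos (by decide : Odd 3)]
    push_cast
    linarith
  have hm4 : (4 : ℚ) ≤ m := by exact_mod_cast hm4
  have hd : 0 ≤ n - (m - 1) := by linarith
  simp only [cross, W1plusCoeffs, WminusCoeffs]
  split_ifs
  · have h : 0 < ((m - 3) ^ 2 + 1) * (n - (m - 1)) + (m - 3) * ((m - 4) * (m - 1) + 1) := by
      nlinarith [mul_nonneg (by positivity : (0 : ℚ) ≤ (m - 3) ^ 2 + 1) hd,
        mul_nonneg (by linarith : (0 : ℚ) ≤ m - 4) (by linarith : (0 : ℚ) ≤ m - 1)]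
    linear_combination mul_pos (by linarith : (0 : ℚ) < 2 * m - 1) h
  · have h : 0 < ((m - 3) ^ 2 + 3) * (n - (m - 1)) + (m - 4) * ((m - 2) ^ 2 + 2) + 6 := by
      nlinarith [mul_nonneg (by positivity : (0 : ℚ) ≤ (m - 3) ^ 2 + 3) hd,
        mul_nonneg (by linarith : (0 : ℚ) ≤ m - 4) (by positivity : (0 : ℚ) ≤ (m - 2) ^ 2 + 2)]
    linear_combination mul_pos (by linarith : (0 : ℚ) < 2 * m - 1) h

theorem two_lt_mul_sub_one {k m : ℕ} (hk : 1 ≤ k) (hm : 3 ≤ m) (hkm : ¬(k = 1 ∧ m = 3)) :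
    (2 : ℚ) < k * (m - 1) := by
  have hm' : (3 : ℚ) ≤ m := by exact_mod_cast hm
  obtain hk2 | rfl : 2 ≤ k ∨ k = 1 := by omega
  · have hk2 : (2 : ℚ) ≤ k := by exact_mod_cast hk2
    nlinarith
  · have hm4 : (4 : ℚ) ≤ m := by exact_mod_cast (by omega : 4 ≤ m)
    rw [Nat.cast_one, one_mul]
    linarith

/-- Lemma 4.8. -/
theorem ribbon_linear_dependence (k m : ℕ) (hk : 1 ≤ k) (hm : 3 ≤ m) :
    ∃ c₀ c₁ c₂ : ℚ, 0 < c₀ ∧ 0 < c₁ ∧ 0 < c₂ ∧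
      ∀ ρ : Fin (2 * k + 1) → ℤ, (∑ i, ρ i) = 0 →
        c₀ * Wminus k m hk ρ + c₁ * W1plus k m hk ρ + c₂ * W2plus k m hk ρ = 0 := by
  by_cases hkm : k = 1 ∧ m = 3
  · -- here the three forms are proportional and all the cross products vanish
    obtain ⟨rfl, rfl⟩ := hkm
    refine ⟨2, 1, 1, by norm_num, by norm_num, by norm_num, fun ρ _ => ?_⟩
    rw [Wminus_eq_coeffs, W1plus_eq_coeffs, W2plus_eq_coeffs]
    norm_num [WminusCoeffs, W1plusCoeffs, W2plusCoeffs]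
    ring
  have hm' : (3 : ℚ) ≤ m := by exact_mod_cast hm
  have hmn : (m : ℚ) - 1 ≤ k * (m - 1) :=
    le_mul_of_one_le_left (by linarith) (by exact_mod_cast hk)
  have hn := two_lt_mul_sub_one hk hm hkm
  obtain ⟨c₀, c₁, c₂, h₀, h₁, h₂, hc⟩ := exists_pos_combination_eq_zero_of_cross_pos
    (cross_W1plusCoeffs_W2plusCoeffs_pos hm' hn)
    (cross_W2plusCoeffs_WminusCoeffs_pos hm hmn hn) (cross_WminusCoeffs_W1plusCoeffs_pos hm hmn hn)
  refine ⟨c₀, c₁, c₂, h₀, h₁, h₂, fun ρ _ => ?_⟩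
  rw [Wminus_eq_coeffs, W1plus_eq_coeffs, W2plus_eq_coeffs]
  exact hc _ _
end

section
/- For every m ≥ 2, the (2m−1)(2k−1) elements ω_j := (u^{j−m}, u^{−j−m}, 0) and η_j := (0, u^{j−m}, u^{−j−m}) for m ≤ j ≤ mk, together with χ_ℓ := (0, u^{ℓ−m}, 0) for −k(m−1)+1 ≤ ℓ ≤ k(m−1)−1, are linearly independent over ℂ and span V_m; in particular dim_ℂ V_m = (2m−1)(2k−1). (Lemma 3.2: the multiplication map Sym^m H⁰(C,ω_C) → H⁰(C,ω_C^m) for the balanced double A_{2k+1}-curve is surjective, with the indicated basis of its image.) -/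
/-!
Lemma 3.2 for the balanced double `A_{2k+1}`-curve of genus `g = 2k`.  We work in
`T = ℂ(u) × ℂ(u) × ℂ(u)` and model the canonical sections as
`x_i = (u^(i-1), u^(-i-1), 0)` and `y_i = (0, u^(i-1), u^(-i-1))` for `1 ≤ i ≤ k`.
The claim: for `m ≥ 2`, the `(2m-1)(2k-1)` elements `ω_j = (u^(j-m), u^(-j-m), 0)` and
`η_j = (0, u^(j-m), u^(-j-m))` for `m ≤ j ≤ mk`, together with
`χ_ℓ = (0, u^(ℓ-m), 0)` for `-k(m-1)+1 ≤ ℓ ≤ k(m-1)-1`, are linearly independent over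
`ℂ` and span `V_m`; in particular `dim V_m = (2m-1)(2k-1)`.
-/

noncomputable section

/-- The field `ℂ(u)` of rational functions. -/
abbrev K : Type := RatFunc ℂ

/-- The product ring `T = ℂ(u) × ℂ(u) × ℂ(u)`. -/
abbrev T3 : Type := K × K × K

/-- `x_i := (u^(i-1), u^(-i-1), 0)`. -/
def xA (i : ℕ) : T3 :=
  (RatFunc.X ^ ((i : ℤ) - 1), RatFunc.X ^ (-(i : ℤ) - 1), 0)

/-- `y_i := (0, u^(i-1), u^(-i-1))`. -/
def yA (i : ℕ) : T3 :=
  (0, RatFunc.X ^ ((i : ℤ) - 1), RatFunc.X ^ (-(i : ℤ) - 1))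

/-- The `2k` variables `x_1,…,x_k,y_1,…,y_k`, indexed by `Fin k ⊕ Fin k`. -/
def varA (k : ℕ) : Fin k ⊕ Fin k → T3 :=
  Sum.elim (fun i => xA ((i : ℕ) + 1)) (fun i => yA ((i : ℕ) + 1))

/-- `V_m`: the `ℂ`-span of all degree-`m` monomials in the variables `x_i, y_i`. -/
def VA (k m : ℕ) : Submodule ℂ T3 :=
  Submodule.span ℂ
    {t : T3 | ∃ σ : Multiset (Fin k ⊕ Fin k), Multiset.card σ = m ∧ t = (σ.map (varA k)).prod}

/-- `ω_j := (u^(j-m), u^(-j-m), 0)`. -/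
def omegaA (m : ℕ) (j : ℕ) : T3 :=
  (RatFunc.X ^ ((j : ℤ) - m), RatFunc.X ^ (-(j : ℤ) - m), 0)

/-- `η_j := (0, u^(j-m), u^(-j-m))`. -/
def etaA (m : ℕ) (j : ℕ) : T3 :=
  (0, RatFunc.X ^ ((j : ℤ) - m), RatFunc.X ^ (-(j : ℤ) - m))

/-- `χ_ℓ := (0, u^(ℓ-m), 0)`. -/
def chiA (m : ℕ) (ℓ : ℤ) : T3 :=
  (0, RatFunc.X ^ (ℓ - (m : ℤ)), 0)

/-- The claimed basis family of `V_m`: `ω_j` and `η_j` for `m ≤ j ≤ mk`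
(`mk - m + 1` members each) and `χ_ℓ` for `-k(m-1)+1 ≤ ℓ ≤ k(m-1)-1`
(`2k(m-1) - 1` members); in total `(2m-1)(2k-1)` elements. -/
def famA (k m : ℕ) :
    (Fin (m * k - m + 1) ⊕ Fin (m * k - m + 1) ⊕ Fin (2 * k * (m - 1) - 1)) → T3 :=
  Sum.elim (fun i => omegaA m (m + (i : ℕ)))
    (Sum.elim (fun i => etaA m (m + (i : ℕ)))
      (fun i => chiA m ((i : ℤ) - ((k : ℤ) * ((m : ℤ) - 1) - 1))))

/-!
A variable times one of `ω_j`, `η_j`, `χ_ℓ` of degree `m` is again one of them in degree `m + 1`,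
with the index shifted by the weight of the variable: `x_i ω_j = ω_{i+j}`, `y_i η_j = η_{i+j}`,
`x_i η_j = χ_{j-i}`, `y_i ω_j = χ_{i-j}`, `x_i χ_ℓ = χ_{ℓ-i}`, `y_i χ_ℓ = χ_{ℓ+i}`. Checking the
index ranges shows that multiplying the set `B_m` of the `ω_j`, `η_j` (`m ≤ j ≤ mk`) and `χ_ℓ`
(`|ℓ| < k(m-1)`) by the variables gives exactly `B_{m+1}`; for `k ≥ 2` every `χ_ℓ` of degree
`m + 1` is reached, from `η`, `ω` or `χ` by `x_1` or `y_1`. Hence the degree-`m` monomials are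
exactly `B_m`. The members of `B_m` are linearly independent: the `ω_j` are told apart by their
first coordinates, the `η_j` by their third, and the `χ_ℓ`, which vanish in both, by their second,
since the powers `u^n`, `n ∈ ℤ`, are linearly independent in `ℂ(u)`, as their Laurent expansions
show.
-/

open Set
open scoped Pointwise LaurentSeries RatFunc

theorem Set.setOf_multiset_prod_eq_range_pow {ι M : Type*} [CommMonoid M] (f : ι → M) (m : ℕ) :
    {t | ∃ σ : Multiset ι, Multiset.card σ = m ∧ t = (σ.map f).prod} = range f ^ m := by
  induction m with
  | zero => ext t; simp
  | succ m ih =>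
    ext t
    simp only [mem_ofPred_eq, Multiset.card_eq_succ_iff, pow_succ', ← ih, mem_mul, mem_range]
    constructor
    · rintro ⟨σ, ⟨z, τ, rfl, hτ⟩, rfl⟩
      exact ⟨f z, ⟨z, rfl⟩, _, ⟨τ, hτ, rfl⟩, by simp⟩
    · rintro ⟨_, ⟨z, rfl⟩, _, ⟨τ, hτ, rfl⟩, rfl⟩
      exact ⟨z ::ₘ τ, ⟨z, τ, rfl, hτ⟩, by simp⟩

theorem LinearIndependent.sum_elim_of_map_eq_zero {ι ι' R M M' : Type*} [Ring R]
    [AddCommGroup M] [Module R M] [AddCommGroup M'] [Module R M'] {v : ι → M} {w : ι' → M}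
    (f : M →ₗ[R] M') (hv : LinearIndependent R (f ∘ v)) (hw : LinearIndependent R w)
    (hfw : ∀ i, f (w i) = 0) : LinearIndependent R (Sum.elim v w) :=
  (LinearIndependent.of_comp f hv).sum_type hw <|
    (Submodule.range_ker_disjoint hv).mono_right <| Submodule.span_le.2 <| range_subset_iff.2 hfw

namespace RatFunc

variable (F : Type*) [Field F]

theorem algebraMap_laurentSeries_algebraMap (a : F) :
    algebraMap F⟮X⟯ F⸨X⸩ (algebraMap F F⟮X⟯ a) = HahnSeries.C a := by
  simpa [algebraMap_C] using (coe_coe (Polynomial.C a)).symm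

def laurentCoeff : F⟮X⟯ →ₗ[F] (ℤ → F) where
  toFun f n := (algebraMap F⟮X⟯ F⸨X⸩ f).coeff n
  map_add' f g := by ext; simp
  map_smul' a f := by
    ext n
    rw [Algebra.smul_def, map_mul, algebraMap_laurentSeries_algebraMap]
    simp

theorem linearIndependent_X_zpow : LinearIndependent F (fun n : ℤ => (X : F⟮X⟯) ^ n) := by
  refine LinearIndependent.of_comp (laurentCoeff F) ?_
  convert Pi.linearIndependent_single_one ℤ F with n
  ext j
  simp only [laurentCoeff, LinearMap.coe_mk, AddHom.coe_mk, Function.comp_apply, map_zpow₀, coe_X,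
    ← single_zpow, HahnSeries.coeff_single, Pi.single_apply]
  congr

end RatFunc

theorem xA_mul_omegaA (i m j : ℕ) : xA i * omegaA m j = omegaA (m + 1) (i + j) := by
  simp only [xA, omegaA, Prod.mk_mul_mk, mul_zero, ← zpow_add₀ (RatFunc.X_ne_zero (K := ℂ))]
  push_cast; ring_nf

theorem xA_mul_etaA (i m j : ℕ) : xA i * etaA m j = chiA (m + 1) (j - i) := by
  simp only [xA, etaA, chiA, Prod.mk_mul_mk, mul_zero, zero_mul,
    ← zpow_add₀ (RatFunc.X_ne_zero (K := ℂ))]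
  push_cast; ring_nf

theorem xA_mul_chiA (i m : ℕ) (ℓ : ℤ) : xA i * chiA m ℓ = chiA (m + 1) (ℓ - i) := by
  simp only [xA, chiA, Prod.mk_mul_mk, mul_zero, ← zpow_add₀ (RatFunc.X_ne_zero (K := ℂ))]
  push_cast; ring_nf

theorem yA_mul_omegaA (i m j : ℕ) : yA i * omegaA m j = chiA (m + 1) (i - j) := by
  simp only [yA, omegaA, chiA, Prod.mk_mul_mk, mul_zero, zero_mul,
    ← zpow_add₀ (RatFunc.X_ne_zero (K := ℂ))]
  push_cast; ring_nf

theorem yA_mul_etaA (i m j : ℕ) : yA i * etaA m j = etaA (m + 1) (i + j) := by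
  simp only [yA, etaA, Prod.mk_mul_mk, mul_zero, ← zpow_add₀ (RatFunc.X_ne_zero (K := ℂ))]
  push_cast; ring_nf

theorem yA_mul_chiA (i m : ℕ) (ℓ : ℤ) : yA i * chiA m ℓ = chiA (m + 1) (ℓ + i) := by
  simp only [yA, chiA, Prod.mk_mul_mk, mul_zero, ← zpow_add₀ (RatFunc.X_ne_zero (K := ℂ))]
  push_cast; ring_nf

theorem varA_inl_mk {k i : ℕ} (hi : i < k) : varA k (.inl ⟨i, hi⟩) = xA (i + 1) := rfl

theorem varA_inr_mk {k i : ℕ} (hi : i < k) : varA k (.inr ⟨i, hi⟩) = yA (i + 1) := rfl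

def basisSetA (k m : ℕ) : Set T3 :=
  omegaA m '' Icc m (m * k) ∪ etaA m '' Icc m (m * k) ∪
    chiA m '' Ioo (-(((m : ℤ) - 1) * k)) (((m : ℤ) - 1) * k)

section basisSetA

variable {k m j : ℕ} {ℓ : ℤ}

theorem omegaA_mem_basisSetA (h₁ : m ≤ j) (h₂ : j ≤ m * k) : omegaA m j ∈ basisSetA k m :=
  .inl <| .inl ⟨j, ⟨h₁, h₂⟩, rfl⟩

theorem etaA_mem_basisSetA (h₁ : m ≤ j) (h₂ : j ≤ m * k) : etaA m j ∈ basisSetA k m :=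
  .inl <| .inr ⟨j, ⟨h₁, h₂⟩, rfl⟩

theorem chiA_mem_basisSetA (h₁ : -(((m : ℤ) - 1) * k) < ℓ) (h₂ : ℓ < ((m : ℤ) - 1) * k) :
    chiA m ℓ ∈ basisSetA k m :=
  .inr ⟨ℓ, ⟨h₁, h₂⟩, rfl⟩

theorem chiA_succ_mem_basisSetA (h₁ : -((m : ℤ) * k) < ℓ) (h₂ : ℓ < m * k) :
    chiA (m + 1) ℓ ∈ basisSetA k (m + 1) :=
  chiA_mem_basisSetA (by push_cast; simpa using h₁) (by push_cast; simpa using h₂)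

theorem xA_eq_omegaA_one (i : ℕ) : xA i = omegaA 1 i := by
  simp only [xA, omegaA, Nat.cast_one]

theorem yA_eq_etaA_one (i : ℕ) : yA i = etaA 1 i := by
  simp only [yA, etaA, Nat.cast_one]

theorem basisSetA_one : basisSetA k 1 = range (varA k) := by
  ext t
  constructor
  · rintro ((⟨j, ⟨h₁, h₂⟩, rfl⟩ | ⟨j, ⟨h₁, h₂⟩, rfl⟩) | ⟨ℓ, ⟨h₁, h₂⟩, rfl⟩)
    · exact ⟨.inl ⟨j - 1, by omega⟩, by rw [varA_inl_mk, Nat.sub_add_cancel h₁, xA_eq_omegaA_one]⟩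
    · exact ⟨.inr ⟨j - 1, by omega⟩, by rw [varA_inr_mk, Nat.sub_add_cancel h₁, yA_eq_etaA_one]⟩
    · simp only [Nat.cast_one, sub_self, zero_mul, neg_zero] at h₁ h₂
      omega
  · rintro ⟨⟨i, hi⟩ | ⟨i, hi⟩, rfl⟩
    · rw [varA_inl_mk, xA_eq_omegaA_one]
      exact omegaA_mem_basisSetA (by omega) (by omega)
    · rw [varA_inr_mk, yA_eq_etaA_one]
      exact etaA_mem_basisSetA (by omega) (by omega)

theorem range_varA_mul_basisSetA_subset (hm : 1 ≤ m) :
    range (varA k) * basisSetA k m ⊆ basisSetA k (m + 1) := by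
  have hkm : k ≤ m * k := Nat.le_mul_of_pos_left k hm
  rintro _ ⟨_, ⟨⟨i, hi⟩ | ⟨i, hi⟩, rfl⟩, b, hb, rfl⟩ <;>
    rcases hb with (⟨j, ⟨h₁, h₂⟩, rfl⟩ | ⟨j, ⟨h₁, h₂⟩, rfl⟩) | ⟨ℓ, ⟨h₁, h₂⟩, rfl⟩ <;>
    simp only [varA_inl_mk, varA_inr_mk, xA_mul_omegaA, xA_mul_etaA, xA_mul_chiA, yA_mul_omegaA,
      yA_mul_etaA, yA_mul_chiA] <;>
    (try simp only [sub_one_mul] at h₁ h₂) <;>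
    first
    | exact omegaA_mem_basisSetA (by omega) (by rw [Nat.succ_mul]; omega)
    | exact etaA_mem_basisSetA (by omega) (by rw [Nat.succ_mul]; omega)
    | exact chiA_succ_mem_basisSetA (by push_cast; omega) (by push_cast; omega)

theorem range_varA_mul_basisSetA_supset (hk : 2 ≤ k) (hm : 1 ≤ m) :
    basisSetA k (m + 1) ⊆ range (varA k) * basisSetA k m := by
  have hmk : m ≤ m * k := Nat.le_mul_of_pos_right m (by omega)
  rintro _ ((⟨j, ⟨h₁, h₂⟩, rfl⟩ | ⟨j, ⟨h₁, h₂⟩, rfl⟩) | ⟨ℓ, ⟨h₁, h₂⟩, rfl⟩)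
  · rw [Nat.succ_mul] at h₂
    set j' := min (j - 1) (m * k)
    have h : omegaA (m + 1) j = varA k (.inl ⟨j - j' - 1, by omega⟩) * omegaA m j' := by
      rw [varA_inl_mk, xA_mul_omegaA]; congr 1; omega
    exact h ▸ mul_mem_mul (mem_range_self _) (omegaA_mem_basisSetA (by omega) (by omega))
  · rw [Nat.succ_mul] at h₂
    set j' := min (j - 1) (m * k)
    have h : etaA (m + 1) j = varA k (.inr ⟨j - j' - 1, by omega⟩) * etaA m j' := by
      rw [varA_inr_mk, yA_mul_etaA]; congr 1; omega
    exact h ▸ mul_mem_mul (mem_range_self _) (etaA_mem_basisSetA (by omega) (by omega))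
  · push_cast at h₁ h₂
    simp only [add_sub_cancel_right] at h₁ h₂
    by_cases hη : (m : ℤ) ≤ ℓ + 1
    · have h : chiA (m + 1) ℓ = varA k (.inl ⟨0, by omega⟩) * etaA m (ℓ + 1).toNat := by
        rw [varA_inl_mk, xA_mul_etaA]; congr 1; omega
      exact h ▸ mul_mem_mul (mem_range_self _) (etaA_mem_basisSetA (by omega) (by omega))
    by_cases hω : ℓ - 1 ≤ -(m : ℤ)
    · have h : chiA (m + 1) ℓ = varA k (.inr ⟨0, by omega⟩) * omegaA m (1 - ℓ).toNat := by
        rw [varA_inr_mk, yA_mul_omegaA]; congr 1; omega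
      exact h ▸ mul_mem_mul (mem_range_self _) (omegaA_mem_basisSetA (by omega) (by omega))
    have hm₂ : 2 ≤ m := by omega
    have hmk₂ : m + k ≤ m * k := by nlinarith
    have h : chiA (m + 1) ℓ = varA k (.inl ⟨0, by omega⟩) * chiA m (ℓ + 1) := by
      rw [varA_inl_mk, xA_mul_chiA]; congr 1; push_cast; ring
    refine h ▸ mul_mem_mul (mem_range_self _) (chiA_mem_basisSetA ?_ ?_) <;>
      rw [sub_one_mul] <;> omega

theorem range_varA_mul_basisSetA (hk : 2 ≤ k) (hm : 1 ≤ m) :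
    range (varA k) * basisSetA k m = basisSetA k (m + 1) :=
  (range_varA_mul_basisSetA_subset hm).antisymm (range_varA_mul_basisSetA_supset hk hm)

theorem range_varA_pow (hk : 2 ≤ k) (hm : 1 ≤ m) : range (varA k) ^ m = basisSetA k m := by
  induction m, hm using Nat.le_induction with
  | base => rw [pow_one, basisSetA_one]
  | succ m hm ih => rw [pow_succ', ih, range_varA_mul_basisSetA hk hm]

theorem range_fin_add_eq_image_Icc {α : Type*} (f : ℕ → α) {a b : ℕ} (h : a ≤ b) :
    range (fun i : Fin (b - a + 1) => f (a + i)) = f '' Icc a b := by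
  ext t
  constructor
  · rintro ⟨i, rfl⟩
    exact ⟨a + i, ⟨by omega, by omega⟩, rfl⟩
  · rintro ⟨j, ⟨h₁, h₂⟩, rfl⟩
    exact ⟨⟨j - a, by omega⟩, by simp only [Nat.add_sub_cancel' h₁]⟩

theorem range_famA (hk : 1 ≤ k) (hm : 1 ≤ m) : range (famA k m) = basisSetA k m := by
  have hmk : m ≤ m * k := Nat.le_mul_of_pos_right m hk
  rw [famA, Sum.elim_range, Sum.elim_range, range_fin_add_eq_image_Icc _ hmk,
    range_fin_add_eq_image_Icc _ hmk, basisSetA, union_assoc]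
  congr 2
  obtain ⟨n, rfl⟩ := Nat.exists_eq_add_of_le' hm
  have hkn : ((2 * k * n : ℕ) : ℤ) = 2 * (n * k) := by push_cast; ring
  rw [Nat.add_sub_cancel]
  push_cast
  simp only [add_sub_cancel_right, mul_comm (k : ℤ)]
  ext t
  simp only [mem_range, mem_image, mem_Ioo]
  constructor
  · rintro ⟨i, rfl⟩
    have := i.isLt
    refine ⟨_, ⟨?_, ?_⟩, rfl⟩ <;> omega
  · rintro ⟨ℓ, ⟨h₁, h₂⟩, rfl⟩
    exact ⟨⟨(ℓ + (n * k - 1)).toNat, by omega⟩, by dsimp only; congr 1; omega⟩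

end basisSetA

theorem linearIndependent_famA (k m : ℕ) : LinearIndependent ℂ (famA k m) := by
  have hX := RatFunc.linearIndependent_X_zpow ℂ
  refine .sum_elim_of_map_eq_zero (LinearMap.fst ℂ K (K × K)) ?_
    (.sum_elim_of_map_eq_zero ((LinearMap.snd ℂ K K) ∘ₗ (LinearMap.snd ℂ K (K × K))) ?_
      (.of_comp ((LinearMap.fst ℂ K K) ∘ₗ LinearMap.snd ℂ K (K × K)) ?_) fun _ => rfl)
    (by rintro (_ | _) <;> rfl)
  · exact hX.comp (fun i : Fin _ => ((m + i : ℕ) : ℤ) - m) fun a b h => by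
      simpa [Fin.val_inj] using h
  · exact hX.comp (fun i : Fin _ => -((m + i : ℕ) : ℤ) - m) fun a b h => by
      simpa [Fin.val_inj] using h
  · exact hX.comp (fun i : Fin _ => (i : ℤ) - (k * (m - 1) - 1) - m) fun a b h => by
      simpa [Fin.val_inj] using h

/-- Lemma 3.2. -/
theorem doubleA_pluricanonical_basis (k m : ℕ) (hk : 2 ≤ k) (hm : 2 ≤ m) :
    LinearIndependent ℂ (famA k m) ∧
    Submodule.span ℂ (Set.range (famA k m)) = VA k m ∧
    Module.finrank ℂ ↥(VA k m) = (2 * m - 1) * (2 * k - 1) := by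
  have hspan : Submodule.span ℂ (range (famA k m)) = VA k m := by
    rw [VA, setOf_multiset_prod_eq_range_pow, range_varA_pow hk (by omega),
      range_famA (by omega) (by omega)]
  refine ⟨linearIndependent_famA k m, hspan, ?_⟩
  rw [← hspan, finrank_span_eq_card (linearIndependent_famA k m)]
  simp only [Fintype.card_sum, Fintype.card_fin]
  have hmk : m ≤ m * k := Nat.le_mul_of_pos_right m (by omega)
  have hkm : 1 ≤ 2 * k * (m - 1) := Nat.mul_pos (by omega) (by omega)
  zify [hmk, hkm, (by omega : 1 ≤ m), (by omega : 1 ≤ 2 * m), (by omega : 1 ≤ 2 * k)]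
  ring
end
end

section
/- For all natural numbers n and m: (i) the sum Σ_{i+j=d, 0≤i≤n, 0≤j≤m} c(i,j) takes the same value for every d with 0 ≤ d ≤ n+m; (ii) the sum Σ_{j=0}^m c(i,j) takes the same value for every i with 0 ≤ i ≤ n; and (iii) the sum Σ_{i=0}^n c(i,j) takes the same value for every j with 0 ≤ j ≤ m. Consequently, the multiset S of quadratic monomials x_i·y_j in which x_i·y_j occurs c(i,j) times satisfies: every degree in [0, n+m] occurs |S|/(n+m+1) times in S, each variable x_i occurs |S|/(n+1) times, and each variable y_j occurs |S|/(m+1) times. (Lemma 5.5.) -/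
/-!
Since `n+m-i-j = (n-i)+(m-j)`, the row sum `Σ_j c(i,j)` is the coefficient of `X^m` in
`(1-X)^{-(i+1)}·(1-X)^{-(n-i+1)} = (1-X)^{-(n+2)}`, namely `C(n+m+1, n+1)`, whatever `i` is; the
column sums follow from the symmetry `c_{n,m}(i,j) = c_{m,n}(j,i)`. On the diagonal `i + j = d` the
weight is `C(d,i)·C(n+m-d, n-i)`, which Vandermonde's identity sums to `C(n+m, n)`. The absorption
identity `(n+1)·C(n+m+1, n+1) = (n+m+1)·C(n+m, n)` ties the three constants to the total.
-/

/-- `c(i,j) := C(i+j, i) · C(n+m−i−j, n−i)`. -/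
def cPath (n m i j : ℕ) : ℕ := Nat.choose (i + j) i * Nat.choose (n + m - i - j) (n - i)

/-- The number of monomials of degree `d` in the multiset, counted with multiplicity. -/
def dCount (n m d : ℕ) : ℕ :=
  ∑ i ∈ Finset.range (n + 1), ∑ j ∈ Finset.range (m + 1),
    if i + j = d then cPath n m i j else 0

/-- The number of occurrences of `x_i` in the multiset. -/
def xCount (n m i : ℕ) : ℕ := ∑ j ∈ Finset.range (m + 1), cPath n m i j

/-- The number of occurrences of `y_j` in the multiset. -/
def yCount (n m j : ℕ) : ℕ := ∑ i ∈ Finset.range (n + 1), cPath n m i j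

/-- The total size `|S|` of the multiset. -/
def totCount (n m : ℕ) : ℕ :=
  ∑ i ∈ Finset.range (n + 1), ∑ j ∈ Finset.range (m + 1), cPath n m i j

open Finset PowerSeries

theorem Finset.sum_antidiagonal_choose_add_mul_choose_add (a b m : ℕ) :
    ∑ p ∈ antidiagonal m, (a + p.1).choose a * (b + p.2).choose b
      = (a + b + 1 + m).choose (a + b + 1) := by
  have h := congrArg (fun f => coeff m f.val) (invOneSubPow_add ℤ (a + 1) (b + 1))
  simp only [show a + 1 + (b + 1) = a + b + 1 + 1 by omega, Units.val_mul,
    invOneSubPow_val_succ_eq_mk_add_choose, coeff_mul, coeff_mk] at h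
  exact_mod_cast h.symm

theorem Nat.add_one_mul_choose_add_one_add (n m : ℕ) :
    (n + 1) * (n + 1 + m).choose (n + 1) = (n + m + 1) * (n + m).choose n := by
  rw [Nat.add_one_mul_choose_eq, Nat.mul_comm, Nat.add_right_comm]

theorem cPath_eq_choose_mul_choose {n m i j : ℕ} (hi : i ≤ n) (hj : j ≤ m) :
    cPath n m i j = (i + j).choose i * ((n - i) + (m - j)).choose (n - i) := by
  rw [cPath, show n + m - i - j = (n - i) + (m - j) by omega]

theorem cPath_comm {n m i j : ℕ} (hi : i ≤ n) (hj : j ≤ m) :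
    cPath n m i j = cPath m n j i := by
  rw [cPath_eq_choose_mul_choose hi hj, cPath_eq_choose_mul_choose hj hi, Nat.add_comm j,
    Nat.add_comm (m - j), Nat.choose_symm_add, Nat.choose_symm_add]

theorem cPath_of_add_eq {n m i j d : ℕ} (h : i + j = d) :
    cPath n m i j = d.choose i * (n + m - d).choose (n - i) := by
  rw [cPath, ← h, Nat.sub_sub]

theorem xCount_eq {n m i : ℕ} (hi : i ≤ n) : xCount n m i = (n + 1 + m).choose (n + 1) := by
  have hrow : ∀ j ∈ range (m + 1),
      cPath n m i j = (i + j).choose i * ((n - i) + (m - j)).choose (n - i) :=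
    fun j hj => cPath_eq_choose_mul_choose hi (mem_range_succ_iff.mp hj)
  rw [xCount, sum_congr rfl hrow,
    ← Nat.sum_antidiagonal_eq_sum_range_succ
      (fun j k => (i + j).choose i * (n - i + k).choose (n - i)),
    sum_antidiagonal_choose_add_mul_choose_add, Nat.add_sub_cancel' hi]

theorem yCount_eq {n m j : ℕ} (hj : j ≤ m) : yCount n m j = (m + 1 + n).choose (m + 1) := by
  have hcol : ∀ i ∈ range (n + 1), cPath n m i j = cPath m n j i :=
    fun i hi => cPath_comm (mem_range_succ_iff.mp hi) hj
  rw [yCount, sum_congr rfl hcol, ← xCount, xCount_eq hj]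

theorem sum_cPath_ite_add_eq {n m i d : ℕ} (hi : i ≤ n) (hd : d ≤ n + m) :
    ∑ j ∈ range (m + 1), (if i + j = d then cPath n m i j else 0)
      = d.choose i * (n + m - d).choose (n - i) := by
  have hterm : ∀ j ∈ range (m + 1), (if i + j = d then cPath n m i j else 0)
      = if d - i = j then d.choose i * (n + m - d).choose (n - i) else 0 := by
    intro j _
    by_cases hij : i + j = d
    · rw [if_pos hij, if_pos (by omega), cPath_of_add_eq hij]
    · rw [if_neg hij]
      split_ifs with hj
      · rw [Nat.choose_eq_zero_of_lt (by omega), Nat.zero_mul]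
      · rfl
  rw [sum_congr rfl hterm, sum_ite_eq]
  split_ifs with hdi
  · rfl
  · rw [mem_range] at hdi
    rw [Nat.choose_eq_zero_of_lt (show n + m - d < n - i by omega), Nat.mul_zero]

theorem dCount_eq {n m d : ℕ} (hd : d ≤ n + m) : dCount n m d = (n + m).choose n := by
  have hrow : ∀ i ∈ range (n + 1),
      (∑ j ∈ range (m + 1), if i + j = d then cPath n m i j else 0)
        = d.choose i * (n + m - d).choose (n - i) :=
    fun i hi => sum_cPath_ite_add_eq (mem_range_succ_iff.mp hi) hd
  rw [dCount, sum_congr rfl hrow,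
    ← Nat.sum_antidiagonal_eq_sum_range_succ (fun i k => d.choose i * (n + m - d).choose k),
    ← Nat.add_choose_eq, Nat.add_sub_cancel' hd]

theorem totCount_eq (n m : ℕ) : totCount n m = (n + m + 1) * (n + m).choose n := by
  have hrow : ∀ i ∈ range (n + 1), xCount n m i = (n + 1 + m).choose (n + 1) :=
    fun i hi => xCount_eq (mem_range_succ_iff.mp hi)
  change ∑ i ∈ range (n + 1), xCount n m i = _
  rw [sum_congr rfl hrow, sum_const, card_range, smul_eq_mul,
    Nat.add_one_mul_choose_add_one_add]

/-- Lemma 5.5. -/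
theorem path_lemma (n m : ℕ) :
    (∀ d d' : ℕ, d ≤ n + m → d' ≤ n + m → dCount n m d = dCount n m d') ∧
    (∀ i i' : ℕ, i ≤ n → i' ≤ n → xCount n m i = xCount n m i') ∧
    (∀ j j' : ℕ, j ≤ m → j' ≤ m → yCount n m j = yCount n m j') ∧
    (∀ d : ℕ, d ≤ n + m → (n + m + 1) * dCount n m d = totCount n m) ∧
    (∀ i : ℕ, i ≤ n → (n + 1) * xCount n m i = totCount n m) ∧
    (∀ j : ℕ, j ≤ m → (m + 1) * yCount n m j = totCount n m) := by
  refine ⟨fun d d' hd hd' => by rw [dCount_eq hd, dCount_eq hd'],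
    fun i i' hi hi' => by rw [xCount_eq hi, xCount_eq hi'],
    fun j j' hj hj' => by rw [yCount_eq hj, yCount_eq hj'],
    fun d hd => by rw [dCount_eq hd, totCount_eq],
    fun i hi => by rw [xCount_eq hi, totCount_eq, Nat.add_one_mul_choose_add_one_add],
    fun j hj => by
      rw [yCount_eq hj, totCount_eq, Nat.add_one_mul_choose_add_one_add, Nat.add_comm m n,
        Nat.choose_symm_add]⟩
end

section
/- For every integer g ≥ 3, the 3g−3 residues modulo 4g+2 of the integers 2i−4g+2 for 0 ≤ i ≤ 2g−2 and 2j−2g+3 for 0 ≤ j ≤ g−3 are pairwise distinct. (This is the content of Lemma 5.3: H⁰(C,K_C²) is a multiplicity-free representation of Aut(C) ≅ μ_{4g+2} for the Wiman curve C, with the distinguished basis compatible with the irreducible decomposition.) -/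
/-!
The weights `2i − 4g + 2` are even and the weights `2j − 2g + 3` are odd, and parity survives
reduction modulo the even number `4g + 2`, so the two families cannot meet. Within each family the
weights are distinct integers spread over an interval shorter than `4g + 2`, hence stay distinct
modulo `4g + 2`.
-/

namespace ZMod

theorem intCast_comp_injective_of_abs_sub_lt {α : Type*} {n : ℕ} {f : α → ℤ}
    (hf : Function.Injective f) (hspread : ∀ a b, |f a - f b| < n) :
    Function.Injective fun a => (f a : ZMod n) := fun a b h =>
  hf <| sub_eq_zero.mp <|
    Int.eq_zero_of_abs_lt_dvd ((intCast_eq_intCast_iff_dvd_sub _ _ _).mp h.symm) (hspread a b)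

theorem intCast_ne_of_even_of_odd {n : ℕ} (hn : Even n) {a b : ℤ} (ha : Even a) (hb : Odd b) :
    (a : ZMod n) ≠ b := fun h =>
  have two_dvd : (2 : ℤ) ∣ b - a :=
    (Int.natCast_dvd_natCast.mpr (even_iff_two_dvd.mp hn)).trans
      ((intCast_eq_intCast_iff_dvd_sub _ _ _).mp h)
  Int.not_even_iff_odd.mpr (hb.sub_even ha) (even_iff_two_dvd.mpr two_dvd)

end ZMod

theorem wiman_weights_distinct_general (g : ℕ) :
    Function.Injective (Sum.elim
      (fun i : Fin (2 * g - 1) => ((2 * (i : ℤ) - 4 * g + 2 : ℤ) : ZMod (4 * g + 2)))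
      (fun j : Fin (g - 2) => ((2 * (j : ℤ) - 2 * g + 3 : ℤ) : ZMod (4 * g + 2)))) := by
  refine Function.Injective.sumElim ?_ ?_ fun i j => ?_
  · refine ZMod.intCast_comp_injective_of_abs_sub_lt (fun a b h => Fin.ext (by omega))
      fun a b => abs_lt.mpr ?_
    have := a.isLt; have := b.isLt
    push_cast; omega
  · refine ZMod.intCast_comp_injective_of_abs_sub_lt (fun a b h => Fin.ext (by omega))
      fun a b => abs_lt.mpr ?_
    have := a.isLt; have := b.isLt
    push_cast; omega
  · exact ZMod.intCast_ne_of_even_of_odd ⟨2 * g + 1, by ring⟩ ⟨i - 2 * g + 1, by ring⟩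
      ⟨j - g + 1, by ring⟩

/-- Lemma 5.3: the `μ_{4g+2}`-weights of the distinguished bicanonical basis of the
Wiman curve are pairwise distinct modulo `4g+2`. -/
theorem wiman_weights_distinct (g : ℕ) (hg : 3 ≤ g) :
    Function.Injective (Sum.elim
      (fun i : Fin (2 * g - 1) => ((2 * (i : ℤ) - 4 * g + 2 : ℤ) : ZMod (4 * g + 2)))
      (fun j : Fin (g - 2) => ((2 * (j : ℤ) - 2 * g + 3 : ℤ) : ZMod (4 * g + 2)))) :=
  wiman_weights_distinct_general g
end

section
/- For all integers g ≥ 3 and m ≥ 2, there exists a Type I multibasis (c₁, c₂, s) that is balanced with the following occurrence counts: the combined occurrence count Σ_{(a,b)} c₁(a,b)·a(i) + Σ_{(a,b)} c₂(a,b)·a(i) equals s·((4g−4)m² − (3g−3)m + g)/(2g−1) for every i ∈ {0,…,2g−2}, and the occurrence count Σ_{(a,b)} c₂(a,b)·b(j) equals s·((2g−2)m − g)/(g−2) for every j ∈ {0,…,g−3}. (Proposition 5.9: there is a Type I multibasis of H⁰(C,O_C(m)) for the bicanonical Wiman curve whose weight is (((4g−4)m²−(3g−3)m+g)/(2g−1))·Λ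 + (((2g−2)m−g)/(g−2))·N, where Λ and N are the total x- and y-weights.) -/
/-!
Write `D = 2g - 2`. For `k ≥ 1` and every degree `0 ≤ d ≤ Dk` take two monomials of `z`-degree
`d` in the `x_i`: the balanced one `x_q ^ (k - r) x_(q+1) ^ r` (`d = qk + r`) with weight `D`, and
the extremal one `x_D ^ q x_r x_0 ^ (k - 1 - q)` (`d = qD + r`) with weight `1`. Balanced
monomials underuse `x_0` and `x_D`, extremal ones overuse them, and with these weights every `x_i`
occurs exactly `k (Dk + 1)` times over all `d`. This is the `W(m, 0)` part, scaled by a common `S`.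

For `W(m - 1, 1)`, put `X = D (m - 1)` and multiply the family of degree `e` by `y_j` with weight
the number of monotone lattice paths from `(0, 0)` to `(g - 3, X)` through `(j, e)`. Each path
crosses every antidiagonal `j + e = d` once, so every degree occurs `S = C(X + g - 3, g - 3)`
times, and by the upper Vandermonde identity the weights have constant row and column sums, which
balances the `y_j` and keeps the `x_i` balanced.
-/

open scoped Classical

/-- `(k, r)`-monomials for the Wiman curve of genus `g`: a multiset of `k` `x`-indices
in `{0,…,2g−2}` together with a multiset of `r` `y`-indices in `{0,…,g−3}`. -/
abbrev WMon (g k r : ℕ) := Sym (Fin (2 * g - 1)) k × Sym (Fin (g - 2)) r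

def zdeg {g k r : ℕ} (p : WMon g k r) : ℕ :=
  (p.1.1.map (fun i : Fin (2 * g - 1) => (i : ℕ))).sum +
    (p.2.1.map (fun j : Fin (g - 2) => (j : ℕ))).sum

open Finset

/-- Hermite's identity. -/
theorem Nat.sum_range_add_div {k : ℕ} (hk : 0 < k) (d : ℕ) : ∑ t ∈ range k, (d + t) / k = d := by
  induction d with
  | zero =>
    exact sum_eq_zero fun t ht => by simpa using Nat.div_eq_of_lt (mem_range.1 ht)
  | succ d ih =>
    have h := sum_range_succ' (fun t => (d + t) / k) k
    rw [sum_range_succ, ih, Nat.add_div_right d hk, add_zero] at h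
    simp only [← add_assoc, add_right_comm d _ 1] at h
    omega

theorem Nat.sum_range_min_sub_mul (D k d : ℕ) (hd : d ≤ D * k) :
    ∑ t ∈ range k, min (d - t * D) D = d := by
  induction k generalizing d with
  | zero => simp_all
  | succ k ih =>
    have hshift : ∀ t, d - (t + 1) * D = d - D - t * D := fun t => by
      rw [Nat.sub_sub, add_mul, one_mul, add_comm]
    simp only [sum_range_succ', hshift, ih (d - D) (by rw [Nat.mul_succ] at hd; omega)]
    omega

theorem Nat.card_filter_range_of_iff {n : ℕ} {P : ℕ → Prop} [DecidablePred P] (a b : ℕ)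
    (hb : b ≤ n) (hP : ∀ d < n, P d ↔ a ≤ d ∧ d < b) : #{d ∈ range n | P d} = b - a := by
  rw [← Nat.card_Ico]
  congr 1
  ext d
  simp only [mem_filter, mem_range, mem_Ico]
  constructor
  · rintro ⟨hd, h⟩; exact (hP d hd).1 h
  · rintro h; exact ⟨by omega, (hP d (by omega)).2 h⟩

/-- The upper Vandermonde identity. -/
theorem Nat.sum_antidiagonal_add_choose_mul_add_choose (a b n : ℕ) :
    ∑ ij ∈ antidiagonal n, (a + ij.1).choose a * (b + ij.2).choose b =
      (a + b + 1 + n).choose (a + b + 1) := by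
  -- coefficient of `X ^ n` in `(1 - X)⁻¹ ^ (a + 1) * (1 - X)⁻¹ ^ (b + 1) = (1 - X)⁻¹ ^ (a + b + 2)`
  have h := congrArg (PowerSeries.coeff n)
    (congrArg Units.val (PowerSeries.invOneSubPow_add ℤ (a + 1) (b + 1)))
  rw [show a + 1 + (b + 1) = a + b + 1 + 1 by ring] at h
  simp only [Units.val_mul, PowerSeries.invOneSubPow_val_succ_eq_mk_add_choose,
    PowerSeries.coeff_mul, PowerSeries.coeff_mk] at h
  exact_mod_cast h.symm

theorem sum_filter_eq_of_forall_eq {ι M : Type*} [DecidableEq ι] [AddCommMonoid M] {s : Finset ι}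
    {φ : ι → ι} (hφ : ∀ x ∈ s, φ x = x) {a : ι} (ha : a ∈ s) (w : ι → M) :
    ∑ x ∈ s with φ x = a, w x = w a := by
  rw [filter_congr fun x hx => by rw [hφ x hx], filter_eq', if_pos ha, sum_singleton]

section weightedImage

variable {ι α M : Type*} [DecidableEq α] [Fintype α]

def weightedImage [AddCommMonoid M] (s : Finset ι) (w : ι → M) (f : ι → α) (a : α) : M :=
  ∑ x ∈ s with f x = a, w x

theorem sum_weightedImage_mul [NonUnitalNonAssocSemiring M] (s : Finset ι) (w : ι → M)
    (f : ι → α) (F : α → M) : ∑ a, weightedImage s w f a * F a = ∑ x ∈ s, w x * F (f x) := by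
  simp only [weightedImage, sum_mul]
  rw [← sum_fiberwise s f]
  exact sum_congr rfl fun a _ => sum_congr rfl fun x hx => by rw [(mem_filter.1 hx).2]

theorem sum_filter_weightedImage [AddCommMonoid M] (s : Finset ι) (w : ι → M) (f : ι → α)
    (P : α → Prop) [DecidablePred P] :
    ∑ a with P a, weightedImage s w f a = ∑ x ∈ s with P (f x), w x := by
  simp only [weightedImage]
  rw [← sum_fiberwise_of_maps_to (t := univ.filter P) (g := f)
    (fun x hx => by simpa using (mem_filter.1 hx).2)]
  refine sum_congr rfl fun a ha => ?_
  rw [filter_filter]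
  refine sum_congr (filter_congr fun x _ => ?_) fun _ _ => rfl
  simp only [mem_filter, mem_univ, true_and] at ha
  constructor
  · rintro rfl; exact ⟨ha, rfl⟩
  · exact And.right

end weightedImage

/-- The monomial `∏_{t < k} x_(f t)` in the variables `x_0, …, x_(N-1)`, indices read modulo `N`. -/
def indexMonomial (N k : ℕ) [NeZero N] (f : ℕ → ℕ) : Sym (Fin N) k :=
  ⟨(Multiset.range k).map fun t => Fin.ofNat N (f t), by simp⟩

section indexMonomial

variable {N k : ℕ} [NeZero N] {f : ℕ → ℕ}

theorem coe_indexMonomial (f : ℕ → ℕ) :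
    (indexMonomial N k f).1 = (Multiset.range k).map fun t => Fin.ofNat N (f t) :=
  rfl

theorem sum_val_indexMonomial (hf : ∀ t < k, f t < N) :
    ((indexMonomial N k f).1.map (fun i : Fin N => (i : ℕ))).sum = ∑ t ∈ range k, f t := by
  rw [coe_indexMonomial, Multiset.map_map, ← Finset.range_val, Finset.sum_eq_multiset_sum]
  refine congrArg _ (Multiset.map_congr rfl fun t ht => Nat.mod_eq_of_lt ?_)
  exact hf t (Finset.mem_range.1 ht)

theorem count_indexMonomial (hf : ∀ t < k, f t < N) (i : Fin N) :
    (indexMonomial N k f).1.count i = #{t ∈ range k | f t = i} := by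
  rw [coe_indexMonomial, Multiset.count_map, ← Finset.range_val, Finset.card_def,
    Finset.filter_val]
  refine congrArg _ (Multiset.filter_congr fun t ht => ?_)
  rw [Fin.ext_iff, Fin.val_ofNat, Nat.mod_eq_of_lt (hf t (Finset.mem_range.1 ht)), eq_comm]

end indexMonomial

/-- For `d = q * k + r` with `r < k` this is `x_q ^ (k - r) * x_(q+1) ^ r`. -/
def balancedMonomial (N k d : ℕ) [NeZero N] : Sym (Fin N) k :=
  indexMonomial N k fun t => (d + t) / k

/-- For `d = q * (N - 1) + r` with `r < N - 1` this is `x_(N-1) ^ q * x_r * x_0 ^ (k - 1 - q)`. -/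
def extremalMonomial (N k d : ℕ) [NeZero N] : Sym (Fin N) k :=
  indexMonomial N k fun t => min (d - t * (N - 1)) (N - 1)

/-- Over `d ≤ D k`, the `t`-th factor of the balanced monomial is `x_i` for `k` values of `d`
(`k - t` and `t + 1` at the ends `i = 0, D`), that of the extremal one for a single `d`
(`t D + 1` and `(k - 1 - t) D + 1` at the ends); weighting them `D : 1` evens this out. -/
theorem mul_card_div_add_card_min {D k t i : ℕ} (hD : 0 < D) (ht : t < k) (hi : i ≤ D) :
    D * #{d ∈ range (D * k + 1) | (d + t) / k = i} +
      #{d ∈ range (D * k + 1) | min (d - t * D) D = i} = D * k + 1 := by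
  obtain ⟨r, rfl⟩ := Nat.exists_eq_add_of_lt ht
  have hdiv : ∀ d, (d + t) / (t + r + 1) = i ↔
      i * (t + r + 1) ≤ d + t ∧ d + t < i * (t + r + 1) + (t + r + 1) := fun d => by
    rw [Nat.div_eq_iff (by omega)]; omega
  have htD : t * D + D ≤ D * (t + r + 1) := by nlinarith
  rcases Nat.eq_zero_or_pos i with rfl | hi0
  · rw [Nat.card_filter_range_of_iff 0 (r + 1) (by nlinarith) fun d _ => by rw [hdiv]; omega,
      Nat.card_filter_range_of_iff 0 (t * D + 1) (by omega) fun d _ => by omega]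
    simp only [Nat.sub_zero]
    ring
  rcases hi.lt_or_eq with hiD | rfl
  · have hik : i * (t + r + 1) + (t + r + 1) ≤ D * (t + r + 1) := by nlinarith
    have hti : t ≤ i * (t + r + 1) := by nlinarith
    rw [Nat.card_filter_range_of_iff (i * (t + r + 1) - t) (i * (t + r + 1) + r + 1) (by omega)
        fun d _ => by rw [hdiv]; omega,
      Nat.card_filter_range_of_iff (t * D + i) (t * D + i + 1) (by omega) fun d _ => by omega,
      show i * (t + r + 1) + r + 1 - (i * (t + r + 1) - t) = t + r + 1 by omega]
    omega
  · rw [Nat.card_filter_range_of_iff (i * (t + r + 1) - t) (i * (t + r + 1) + 1) le_rfl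
        fun d _ => by rw [hdiv]; omega,
      Nat.card_filter_range_of_iff (t * i + i) (i * (t + r + 1) + 1) le_rfl fun d _ => by omega]
    have hexp : i * (t + r + 1) = t * i + i + i * r := by ring
    have ht_le : t ≤ t * i := Nat.le_mul_of_pos_right t hD
    rw [hexp, show t * i + i + i * r + 1 - (t * i + i + i * r - t) = t + 1 by omega,
      show t * i + i + i * r + 1 - (t * i + i) = i * r + 1 by omega]
    ring

section balancedExtremal

variable {N k d : ℕ} [NeZero N]

theorem add_div_lt_of_le_mul (hk : 0 < k) (hd : d ≤ (N - 1) * k) : ∀ t < k, (d + t) / k < N := by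
  intro t ht
  rw [Nat.div_lt_iff_lt_mul hk]
  have : (N - 1) * k + k = N * k := by
    rw [← Nat.succ_mul, Nat.succ_eq_add_one, Nat.sub_add_cancel NeZero.one_le]
  omega

theorem sum_val_balancedMonomial (hk : 0 < k) (hd : d ≤ (N - 1) * k) :
    ((balancedMonomial N k d).1.map (fun i : Fin N => (i : ℕ))).sum = d := by
  rw [balancedMonomial, sum_val_indexMonomial (add_div_lt_of_le_mul hk hd),
    Nat.sum_range_add_div hk]

theorem sum_val_extremalMonomial (hd : d ≤ (N - 1) * k) :
    ((extremalMonomial N k d).1.map (fun i : Fin N => (i : ℕ))).sum = d := by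
  rw [extremalMonomial, sum_val_indexMonomial fun _ _ => by have := NeZero.pos N; omega,
    Nat.sum_range_min_sub_mul _ _ _ hd]

theorem sum_count_balancedMonomial_extremalMonomial (hN : 2 ≤ N) (hk : 0 < k) (i : Fin N) :
    ∑ d ∈ range ((N - 1) * k + 1), ((N - 1) * (balancedMonomial N k d).1.count i +
      (extremalMonomial N k d).1.count i) = k * ((N - 1) * k + 1) := by
  calc _ = ∑ d ∈ range ((N - 1) * k + 1), ∑ t ∈ range k,
        ((N - 1) * (if (d + t) / k = i then 1 else 0) +
          if min (d - t * (N - 1)) (N - 1) = i then 1 else 0) := by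
        refine sum_congr rfl fun d hd => ?_
        rw [balancedMonomial, extremalMonomial,
          count_indexMonomial (add_div_lt_of_le_mul hk (Nat.lt_succ_iff.1 (mem_range.1 hd))),
          count_indexMonomial fun _ _ => by omega, card_filter, card_filter, mul_sum,
          sum_add_distrib]
    _ = ∑ t ∈ range k, ((N - 1) * #{d ∈ range ((N - 1) * k + 1) | (d + t) / k = i} +
          #{d ∈ range ((N - 1) * k + 1) | min (d - t * (N - 1)) (N - 1) = i}) := by
        rw [sum_comm]
        simp only [card_filter, mul_sum, sum_add_distrib]
    _ = ∑ t ∈ range k, ((N - 1) * k + 1) := sum_congr rfl fun t ht =>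
        mul_card_div_add_card_min (by omega) (mem_range.1 ht) (by omega)
    _ = _ := by rw [sum_const, card_range, smul_eq_mul]

end balancedExtremal

/-- The number of monotone lattice paths from `(0, 0)` to `(H, X)` through `(j, e)`. -/
def pathWeight (H X j e : ℕ) : ℕ := (j + e).choose j * ((H - j) + (X - e)).choose (H - j)

theorem pathWeight_swap (H X j e : ℕ) : pathWeight H X j e = pathWeight X H e j := by
  rw [pathWeight, pathWeight, Nat.choose_symm_add (a := j), Nat.choose_symm_add (a := H - j),
    add_comm j, add_comm (H - j)]

theorem sum_pathWeight_right {H j : ℕ} (X : ℕ) (hj : j ≤ H) :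
    ∑ e ∈ range (X + 1), pathWeight H X j e = (H + X + 1).choose (H + 1) := by
  have h := Nat.sum_antidiagonal_add_choose_mul_add_choose j (H - j) X
  rw [Nat.sum_antidiagonal_eq_sum_range_succ
      (fun e e' => (j + e).choose j * (H - j + e').choose (H - j)),
    show j + (H - j) + 1 = H + 1 by omega] at h
  rw [add_right_comm H X 1, ← h]
  rfl

theorem sum_pathWeight_left {X e : ℕ} (H : ℕ) (he : e ≤ X) :
    ∑ j ∈ range (H + 1), pathWeight H X j e = (H + X + 1).choose (X + 1) := by
  simp only [pathWeight_swap H X]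
  rw [sum_pathWeight_right H he, add_comm X]

theorem sum_pathWeight_add_eq {H X d : ℕ} (hd : d ≤ H + X) :
    ∑ x ∈ range (H + 1) ×ˢ range (X + 1) with x.1 + x.2 = d, pathWeight H X x.1 x.2 =
      (H + X).choose H := by
  have hrow : ∀ j ∈ range (H + 1),
      ∑ e ∈ range (X + 1) with j + e = d, pathWeight H X j e =
        d.choose j * (H + X - d).choose (H - j) := by
    intro j hj
    rw [mem_range] at hj
    by_cases hjd : j ≤ d ∧ d - j ≤ X
    · rw [sum_eq_single_of_mem (d - j) (by simp; omega) (fun e he hne => by simp at he; omega),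
        pathWeight, show j + (d - j) = d by omega, show H - j + (X - (d - j)) = H + X - d by omega]
    · rw [filter_false_of_mem (fun e he => by simp at he; omega), sum_empty]
      rcases not_and_or.1 hjd with h | h
      · rw [Nat.choose_eq_zero_of_lt (by omega), zero_mul]
      · rw [Nat.choose_eq_zero_of_lt (n := H + X - d) (k := H - j) (by omega), mul_zero]
  rw [sum_filter, sum_product]
  simp_rw [← sum_filter]
  rw [sum_congr rfl hrow, ← Nat.sum_antidiagonal_eq_sum_range_succ
    (fun j j' => d.choose j * (H + X - d).choose j'), ← Nat.add_choose_eq,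
    Nat.add_sub_cancel' hd]

theorem count_oneEquiv_ofNat {n a : ℕ} [NeZero n] (ha : a < n) (j : Fin n) :
    (Sym.oneEquiv (Fin.ofNat n a)).1.count j = if a = j then 1 else 0 := by
  simp [Multiset.count_singleton, Fin.ext_iff, Nat.mod_eq_of_lt ha, eq_comm]

section Wiman

variable {g k d : ℕ}

theorem zdeg_mk_nil (a : Sym (Fin (2 * g - 1)) k) :
    zdeg ((a, Sym.nil) : WMon g k 0) = (a.1.map (fun i : Fin (2 * g - 1) => (i : ℕ))).sum :=
  rfl

theorem zdeg_mk_oneEquiv [NeZero (g - 2)] (a : Sym (Fin (2 * g - 1)) k) {j : ℕ}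
    (hj : j < g - 2) :
    zdeg ((a, Sym.oneEquiv (Fin.ofNat (g - 2) j)) : WMon g k 1) =
      (a.1.map (fun i : Fin (2 * g - 1) => (i : ℕ))).sum + j := by
  simp [zdeg, Nat.mod_eq_of_lt hj]

def multibasisW0 (g k S : ℕ) [NeZero (2 * g - 1)] : WMon g k 0 → ℕ :=
  weightedImage (range ((2 * g - 2) * k + 1)) (fun _ => (2 * g - 2) * S)
      (fun d => (balancedMonomial (2 * g - 1) k d, Sym.nil)) +
    weightedImage (range ((2 * g - 2) * k + 1)) (fun _ => S)
      (fun d => (extremalMonomial (2 * g - 1) k d, Sym.nil))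

def multibasisW1 (g k : ℕ) [NeZero (2 * g - 1)] [NeZero (g - 2)] : WMon g k 1 → ℕ :=
  weightedImage (range (g - 2) ×ˢ range ((2 * g - 2) * k + 1))
      (fun x => (2 * g - 2) * pathWeight (g - 3) ((2 * g - 2) * k) x.1 x.2)
      (fun x => (balancedMonomial (2 * g - 1) k x.2, Sym.oneEquiv (Fin.ofNat (g - 2) x.1))) +
    weightedImage (range (g - 2) ×ˢ range ((2 * g - 2) * k + 1))
      (fun x => pathWeight (g - 3) ((2 * g - 2) * k) x.1 x.2)
      (fun x => (extremalMonomial (2 * g - 1) k x.2, Sym.oneEquiv (Fin.ofNat (g - 2) x.1)))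

variable [NeZero (2 * g - 1)]

theorem sum_filter_zdeg_multibasisW0 (hk : 0 < k) (hd : d ≤ (2 * g - 2) * k) (S : ℕ) :
    ∑ p : WMon g k 0 with zdeg p = d, multibasisW0 g k S p = (2 * g - 1) * S := by
  have hN : 2 * g - 1 - 1 = 2 * g - 2 := by omega
  have hle : ∀ e ∈ range ((2 * g - 2) * k + 1), e ≤ (2 * g - 1 - 1) * k := fun e he => by
    rw [hN]; exact Nat.lt_succ_iff.1 (mem_range.1 he)
  simp only [multibasisW0, Pi.add_apply, sum_add_distrib, sum_filter_weightedImage]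
  rw [sum_filter_eq_of_forall_eq
      (fun e he => (zdeg_mk_nil _).trans (sum_val_balancedMonomial hk (hle e he)))
      (mem_range.2 (Nat.lt_succ_of_le hd)),
    sum_filter_eq_of_forall_eq
      (fun e he => (zdeg_mk_nil _).trans (sum_val_extremalMonomial (hle e he)))
      (mem_range.2 (Nat.lt_succ_of_le hd)),
    ← Nat.succ_mul, Nat.succ_eq_add_one, hN.symm, Nat.sub_add_cancel NeZero.one_le]

theorem sum_filter_zdeg_multibasisW1 [NeZero (g - 2)] (hg : 3 ≤ g) (hk : 0 < k)
    (hd : d ≤ (2 * g - 2) * k + (g - 3)) :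
    ∑ p : WMon g k 1 with zdeg p = d, multibasisW1 g k p =
      (2 * g - 1) * (g - 3 + (2 * g - 2) * k).choose (g - 3) := by
  have hN : 2 * g - 1 - 1 = 2 * g - 2 := by omega
  have hfilter : ∀ f : ℕ → Sym (Fin (2 * g - 1)) k,
      (∀ e ≤ (2 * g - 2) * k, ((f e).1.map (fun i : Fin (2 * g - 1) => (i : ℕ))).sum = e) →
      (range (g - 2) ×ˢ range ((2 * g - 2) * k + 1)).filter
          (fun x => zdeg ((f x.2, Sym.oneEquiv (Fin.ofNat (g - 2) x.1)) : WMon g k 1) = d) =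
        (range (g - 3 + 1) ×ˢ range ((2 * g - 2) * k + 1)).filter (fun x => x.1 + x.2 = d) := by
    intro f hf
    rw [show g - 3 + 1 = g - 2 by omega]
    refine filter_congr fun x hx => ?_
    simp only [mem_product, mem_range] at hx
    rw [zdeg_mk_oneEquiv _ hx.1, hf _ (by omega), add_comm]
  simp only [multibasisW1, Pi.add_apply, sum_add_distrib, sum_filter_weightedImage]
  rw [hfilter _ fun e he => sum_val_balancedMonomial hk (hN ▸ he),
    hfilter _ fun e he => sum_val_extremalMonomial (hN ▸ he), ← mul_sum,
    sum_pathWeight_add_eq (by omega), ← Nat.succ_mul, Nat.succ_eq_add_one, hN.symm,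
    Nat.sub_add_cancel NeZero.one_le]

theorem sum_mul_count_multibasisW0 (hg : 2 ≤ g) (hk : 0 < k) (S : ℕ) (i : Fin (2 * g - 1)) :
    ∑ p : WMon g k 0, multibasisW0 g k S p * Multiset.count i p.1.1 =
      S * (k * ((2 * g - 2) * k + 1)) := by
  have h := sum_count_balancedMonomial_extremalMonomial (N := 2 * g - 1) (by omega) hk i
  rw [show 2 * g - 1 - 1 = 2 * g - 2 by omega] at h
  simp only [multibasisW0, Pi.add_apply, add_mul, sum_add_distrib, sum_weightedImage_mul]
  rw [← h, mul_sum, ← sum_add_distrib]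
  exact sum_congr rfl fun d _ => by ring

theorem sum_mul_count_fst_multibasisW1 [NeZero (g - 2)] (hg : 3 ≤ g) (hk : 0 < k)
    (i : Fin (2 * g - 1)) :
    ∑ p : WMon g k 1, multibasisW1 g k p * Multiset.count i p.1.1 =
      k * ((g - 3 + (2 * g - 2) * k + 1) * (g - 3 + (2 * g - 2) * k).choose (g - 3)) := by
  have h := sum_count_balancedMonomial_extremalMonomial (N := 2 * g - 1) (by omega) hk i
  rw [show 2 * g - 1 - 1 = 2 * g - 2 by omega] at h
  have hcol := Nat.add_one_mul_choose_eq (g - 3 + (2 * g - 2) * k) ((2 * g - 2) * k)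
  rw [← Nat.choose_symm_add] at hcol
  rw [hcol, mul_left_comm, ← h, mul_sum]
  simp only [multibasisW1, Pi.add_apply, add_mul, sum_add_distrib, sum_weightedImage_mul]
  rw [← sum_add_distrib, sum_product, sum_comm]
  refine sum_congr rfl fun e he => ?_
  rw [show g - 2 = g - 3 + 1 by omega,
    ← sum_pathWeight_left (g - 3) (Nat.lt_succ_iff.1 (mem_range.1 he)), sum_mul]
  exact sum_congr rfl fun j _ => by ring

theorem mul_sum_mul_count_snd_multibasisW1 [NeZero (g - 2)] (hg : 3 ≤ g) (j : Fin (g - 2)) :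
    (g - 2) * ∑ p : WMon g k 1, multibasisW1 g k p * Multiset.count j p.2.1 =
      (2 * g - 1) *
        ((g - 3 + (2 * g - 2) * k + 1) * (g - 3 + (2 * g - 2) * k).choose (g - 3)) := by
  rw [Nat.add_one_mul_choose_eq, ← sum_pathWeight_right _ (show (j : ℕ) ≤ g - 3 by omega),
    show g - 3 + 1 = g - 2 by omega]
  simp only [multibasisW1, Pi.add_apply, add_mul, sum_add_distrib, sum_weightedImage_mul]
  rw [← sum_add_distrib, sum_product, sum_eq_single_of_mem (j : ℕ) (mem_range.2 j.isLt),
    sum_mul, mul_sum, mul_sum]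
  · refine sum_congr rfl fun e _ => ?_
    rw [count_oneEquiv_ofNat j.isLt, if_pos rfl, show 2 * g - 1 = 2 * g - 2 + 1 by omega]
    ring
  · intro j' hj' hne
    refine sum_eq_zero fun e _ => ?_
    rw [count_oneEquiv_ofNat (mem_range.1 hj'), if_neg hne]
    ring

end Wiman

/-- Proposition 5.9. -/
theorem wiman_typeI_multibasis (g m : ℕ) (hg : 3 ≤ g) (hm : 2 ≤ m) :
    ∃ (c₁ : WMon g m 0 → ℕ) (c₂ : WMon g (m - 1) 1 → ℕ) (s : ℕ), 0 < s ∧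
      (∀ d : ℕ, d ≤ (2 * g - 2) * m →
        (∑ p ∈ Finset.univ.filter (fun p : WMon g m 0 => zdeg p = d), c₁ p) = s) ∧
      (∀ d : ℕ, d ≤ (2 * g - 2) * (m - 1) + (g - 3) →
        (∑ p ∈ Finset.univ.filter (fun p : WMon g (m - 1) 1 => zdeg p = d), c₂ p) = s) ∧
      (∀ i : Fin (2 * g - 1),
        (2 * (g : ℤ) - 1) *
          (((∑ p : WMon g m 0, c₁ p * Multiset.count i p.1.1 : ℕ) : ℤ) +
            ((∑ p : WMon g (m - 1) 1, c₂ p * Multiset.count i p.1.1 : ℕ) : ℤ)) =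
          (s : ℤ) * ((4 * (g : ℤ) - 4) * (m : ℤ) ^ 2 - (3 * (g : ℤ) - 3) * m + g)) ∧
      (∀ j : Fin (g - 2),
        ((g : ℤ) - 2) * ((∑ p : WMon g (m - 1) 1, c₂ p * Multiset.count j p.2.1 : ℕ) : ℤ) =
          (s : ℤ) * ((2 * (g : ℤ) - 2) * m - g)) := by
  have : NeZero (2 * g - 1) := ⟨by omega⟩
  have : NeZero (g - 2) := ⟨by omega⟩
  have hcast : ((2 * g - 1 : ℕ) : ℤ) = 2 * g - 1 ∧ ((2 * g - 2 : ℕ) : ℤ) = 2 * g - 2 ∧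
      ((g - 3 : ℕ) : ℤ) = g - 3 ∧ ((m - 1 : ℕ) : ℤ) = m - 1 := by omega
  refine ⟨multibasisW0 g m ((g - 3 + (2 * g - 2) * (m - 1)).choose (g - 3)),
    multibasisW1 g (m - 1), (2 * g - 1) * (g - 3 + (2 * g - 2) * (m - 1)).choose (g - 3),
    Nat.mul_pos (by omega) (Nat.choose_pos (by omega)),
    fun d hd => sum_filter_zdeg_multibasisW0 (by omega) hd _,
    fun d hd => sum_filter_zdeg_multibasisW1 hg (by omega) hd, fun i => ?_, fun j => ?_⟩
  · rw [sum_mul_count_multibasisW0 (by omega) (by omega),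
      sum_mul_count_fst_multibasisW1 hg (by omega)]
    push_cast [hcast]
    ring
  · rw [← show ((g - 2 : ℕ) : ℤ) = g - 2 by omega, ← Nat.cast_mul,
      mul_sum_mul_count_snd_multibasisW1 hg j]
    push_cast [hcast]
    ring
end
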